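/- arXiv:2109.07539 — 14 statements merged into one kernel-verified Lean document; each statement's English description precedes it below -/
import Mathlib

section
/- Let a,b,c,d be integers with a ≤ b ≤ c < 0 and a+b+c+d ≥ 0, and set k₀ = ⌊d/(-a-b-c)⌋ + 1 (floor of the rational d/(-a-b-c)). Then R(ℒ₃,2) = R(ℒ₃,ℤ/3ℤ) = k₀, i.e., the least n that is 2-good for ℒ₃ equals k₀ and the least n that is (ℤ/3ℤ)-good for ℒ₃ equals k₀. -/
/-- `n` is 2-good for the inequality `ℒ₃ : a*x + b*y + c*z + d < 0`: `n` is a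
positive integer and every 2-coloring of `{1,…,n}` admits a monochromatic
solution of `ℒ₃` with entries in `{1,…,n}`. -/
def TwoGood (a b c d n : ℤ) : Prop :=
  0 < n ∧ ∀ χ : ℤ → Fin 2, ∃ x y z : ℤ,
    x ∈ Set.Icc 1 n ∧ y ∈ Set.Icc 1 n ∧ z ∈ Set.Icc 1 n ∧
    a * x + b * y + c * z + d < 0 ∧ χ x = χ y ∧ χ y = χ z

/-- `n` is (ℤ/3ℤ)-good for the inequality `ℒ₃ : a*x + b*y + c*z + d < 0`: `n` is
a positive integer and every (ℤ/3ℤ)-coloring of `{1,…,n}` admits a zero-sum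
solution of `ℒ₃` with entries in `{1,…,n}`. -/
def ZGood (a b c d n : ℤ) : Prop :=
  0 < n ∧ ∀ χ : ℤ → ZMod 3, ∃ x y z : ℤ,
    x ∈ Set.Icc 1 n ∧ y ∈ Set.Icc 1 n ∧ z ∈ Set.Icc 1 n ∧
    a * x + b * y + c * z + d < 0 ∧ χ x + χ y + χ z = 0

/-- Theorem thm:L3, case `a ≤ b ≤ c < 0`, `a+b+c+d ≥ 0`:
`R(ℒ₃,2) = R(ℒ₃,ℤ/3ℤ) = ⌊d/(-a-b-c)⌋ + 1`. -/
theorem rado_L3_all_neg (a b c d k₀ : ℤ) (hab : a ≤ b) (hbc : b ≤ c) (hc : c < 0)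
    (hσ : 0 ≤ a + b + c + d)
    (hk₀ : k₀ = ⌊(d : ℚ) / ((-a - b - c : ℤ) : ℚ)⌋ + 1) :
    IsLeast {n : ℤ | TwoGood a b c d n} k₀ ∧
      IsLeast {n : ℤ | ZGood a b c d n} k₀ := by
  set s : ℤ := -a - b - c with hs_def
  have ha : a < 0 := by linarith
  have hb : b < 0 := by linarith
  have hs : 0 < s := by simp [hs_def]; linarith
  have hsQ : (0 : ℚ) < (s : ℚ) := by exact_mod_cast hs
  -- floor facts
  have hfl : (k₀ - 1 : ℚ) ≤ (d : ℚ) / (s : ℚ) := by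
    have := Int.floor_le ((d : ℚ) / ((s : ℤ) : ℚ))
    rw [hk₀]
    push_cast
    linarith
  have hfu : (d : ℚ) / (s : ℚ) < (k₀ : ℚ) := by
    have := Int.lt_floor_add_one ((d : ℚ) / ((s : ℤ) : ℚ))
    rw [hk₀]
    push_cast
    linarith
  have hle : s * (k₀ - 1) ≤ d := by
    have : ((s : ℚ)) * (k₀ - 1 : ℚ) ≤ (d : ℚ) := by
      rw [mul_comm]
      exact (le_div_iff₀ hsQ).mp hfl
    exact_mod_cast this
  have hlt : d < s * k₀ := by
    have : (d : ℚ) < (s : ℚ) * (k₀ : ℚ) := by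
      rw [mul_comm]
      exact (div_lt_iff₀ hsQ).mp hfu
    exact_mod_cast this
  have hds : s ≤ d := by simp only [hs_def] at *; linarith
  have hk₀pos : 0 < k₀ := by nlinarith
  have hineq : a * k₀ + b * k₀ + c * k₀ + d < 0 := by
    have : s * k₀ = -(a * k₀) - b * k₀ - c * k₀ := by rw [hs_def]; ring
    linarith
  have hmem : k₀ ∈ Set.Icc (1 : ℤ) k₀ := ⟨hk₀pos, le_refl _⟩
  -- lower bound argument
  have lower : ∀ n x y z : ℤ, x ∈ Set.Icc 1 n → y ∈ Set.Icc 1 n → z ∈ Set.Icc 1 n →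
      a * x + b * y + c * z + d < 0 → k₀ ≤ n := by
    intro n x y z hx hy hz h
    by_contra hcon
    push_neg at hcon
    have hn : n ≤ k₀ - 1 := by omega
    have h1 : a * n ≤ a * x := mul_le_mul_of_nonpos_left hx.2 ha.le
    have h2 : b * n ≤ b * y := mul_le_mul_of_nonpos_left hy.2 hb.le
    have h3 : c * n ≤ c * z := mul_le_mul_of_nonpos_left hz.2 hc.le
    have h4 : s * n ≤ s * (k₀ - 1) := mul_le_mul_of_nonneg_left hn hs.le
    have h5 : s * n = -(a * n) - b * n - c * n := by rw [hs_def]; ring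
    linarith
  constructor
  · constructor
    · exact ⟨hk₀pos, fun χ => ⟨k₀, k₀, k₀, hmem, hmem, hmem, hineq, rfl, rfl⟩⟩
    · rintro n ⟨-, hχ⟩
      obtain ⟨x, y, z, hx, hy, hz, h, -, -⟩ := hχ (fun _ => 0)
      exact lower n x y z hx hy hz h
  · constructor
    · refine ⟨hk₀pos, fun χ => ⟨k₀, k₀, k₀, hmem, hmem, hmem, hineq, ?_⟩⟩
      have h3 : (3 : ZMod 3) = 0 := by decide
      calc χ k₀ + χ k₀ + χ k₀ = 3 * χ k₀ := by ring
        _ = 0 := by rw [h3, zero_mul]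
    · rintro n ⟨-, hχ⟩
      obtain ⟨x, y, z, hx, hy, hz, h, -⟩ := hχ (fun _ => 0)
      exact lower n x y z hx hy hz h
end

section
/- Let a,b,c,d be integers with a ≤ b < 0 < c and a+b+c+d ≥ 0, and set k₁ = ⌊(c+d)/(-a-b)⌋ + 1 and k₂ = ⌊(c·k₁+d)/(-a-b)⌋ + 1 (floors of rationals). Then: (i) for all integers x,y,z with 1 ≤ x,y,z ≤ k₁-1, ax+by+cz+d ≥ 0; and (ii) for all integers x,y,z with k₁ ≤ x,y,z ≤ k₂-1, ax+by+cz+d ≥ 0. Consequently the 2-coloring of {1,…,k₂-1} assigning color 0 to {1,…,k₁-1} and color 1 to {k₁,…,k₂-1} admits no monochromatic triple (x,y,z) with ax+by+cz+d < 0. -/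
/-- Case 2 lower bound: with `a ≤ b < 0 < c`, `a+b+c+d ≥ 0`,
`k₁ = ⌊(c+d)/(-a-b)⌋+1`, `k₂ = ⌊(c·k₁+d)/(-a-b)⌋+1`, every triple from
`[1,k₁-1]` and every triple from `[k₁,k₂-1]` fails ℒ₃, so the 2-coloring of
`[1,k₂-1]` with color 0 on `[1,k₁-1]` and color 1 on `[k₁,k₂-1]` admits no
monochromatic solution of ℒ₃. -/
theorem case2_lower_bound (a b c d k₁ k₂ : ℤ) (hab : a ≤ b) (hb : b < 0) (hc : 0 < c)
    (hσ : 0 ≤ a + b + c + d)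
    (hk₁ : k₁ = ⌊((c + d : ℤ) : ℚ) / ((-a - b : ℤ) : ℚ)⌋ + 1)
    (hk₂ : k₂ = ⌊((c * k₁ + d : ℤ) : ℚ) / ((-a - b : ℤ) : ℚ)⌋ + 1) :
    (∀ x y z : ℤ, x ∈ Set.Icc 1 (k₁ - 1) → y ∈ Set.Icc 1 (k₁ - 1) →
      z ∈ Set.Icc 1 (k₁ - 1) → 0 ≤ a * x + b * y + c * z + d) ∧
    (∀ x y z : ℤ, x ∈ Set.Icc k₁ (k₂ - 1) → y ∈ Set.Icc k₁ (k₂ - 1) →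
      z ∈ Set.Icc k₁ (k₂ - 1) → 0 ≤ a * x + b * y + c * z + d) ∧
    (∀ x y z : ℤ, x ∈ Set.Icc 1 (k₂ - 1) → y ∈ Set.Icc 1 (k₂ - 1) →
      z ∈ Set.Icc 1 (k₂ - 1) →
      ((if x ≤ k₁ - 1 then (0 : Fin 2) else 1) = (if y ≤ k₁ - 1 then (0 : Fin 2) else 1) ∧
       (if y ≤ k₁ - 1 then (0 : Fin 2) else 1) = (if z ≤ k₁ - 1 then (0 : Fin 2) else 1)) →
      ¬ (a * x + b * y + c * z + d < 0)) := by
  have hm0 : (0:ℤ) < -a - b := by omega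
  have hmQ : (0:ℚ) < ((-a - b : ℤ) : ℚ) := by exact_mod_cast hm0
  have h1 : (k₁ - 1) * (-a - b) ≤ c + d := by
    have hf := Int.floor_le (((c + d : ℤ) : ℚ) / ((-a - b : ℤ) : ℚ))
    have hle : ((k₁ - 1 : ℤ) : ℚ) ≤ ((c + d : ℤ) : ℚ) / ((-a - b : ℤ) : ℚ) := by
      rw [hk₁]; push_cast; push_cast at hf; linarith
    have := (le_div_iff₀ hmQ).mp hle
    exact_mod_cast this
  have h2 : (k₂ - 1) * (-a - b) ≤ c * k₁ + d := by
    have hf := Int.floor_le (((c * k₁ + d : ℤ) : ℚ) / ((-a - b : ℤ) : ℚ))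
    have hle : ((k₂ - 1 : ℤ) : ℚ) ≤ ((c * k₁ + d : ℤ) : ℚ) / ((-a - b : ℤ) : ℚ) := by
      rw [hk₂]; push_cast; push_cast at hf; linarith
    have := (le_div_iff₀ hmQ).mp hle
    exact_mod_cast this
  have ha0 : a ≤ 0 := by omega
  have hb0 : b ≤ 0 := by omega
  have p1 : ∀ x y z : ℤ, x ∈ Set.Icc 1 (k₁ - 1) → y ∈ Set.Icc 1 (k₁ - 1) →
      z ∈ Set.Icc 1 (k₁ - 1) → 0 ≤ a * x + b * y + c * z + d := by
    intro x y z hx hy hz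
    simp only [Set.mem_Icc] at hx hy hz
    have hax := mul_le_mul_of_nonpos_left hx.2 ha0
    have hby := mul_le_mul_of_nonpos_left hy.2 hb0
    have hcz := mul_le_mul_of_nonneg_left hz.1 hc.le
    nlinarith [h1]
  have p2 : ∀ x y z : ℤ, x ∈ Set.Icc k₁ (k₂ - 1) → y ∈ Set.Icc k₁ (k₂ - 1) →
      z ∈ Set.Icc k₁ (k₂ - 1) → 0 ≤ a * x + b * y + c * z + d := by
    intro x y z hx hy hz
    simp only [Set.mem_Icc] at hx hy hz
    have hax := mul_le_mul_of_nonpos_left hx.2 ha0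
    have hby := mul_le_mul_of_nonpos_left hy.2 hb0
    have hcz := mul_le_mul_of_nonneg_left hz.1 hc.le
    nlinarith [h2]
  refine ⟨p1, p2, ?_⟩
  intro x y z hx hy hz he hlt
  simp only [Set.mem_Icc] at hx hy hz
  obtain ⟨e1, e2⟩ := he
  by_cases h₁ : x ≤ k₁ - 1 <;> by_cases h₂ : y ≤ k₁ - 1 <;> by_cases h₃ : z ≤ k₁ - 1 <;>
      simp only [h₁, h₂, h₃, if_true, if_false, if_pos, if_neg, not_false_iff] at e1 e2
  · exact absurd hlt (not_lt.2 (p1 x y z (Set.mem_Icc.2 ⟨hx.1, h₁⟩)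
      (Set.mem_Icc.2 ⟨hy.1, h₂⟩) (Set.mem_Icc.2 ⟨hz.1, h₃⟩)))
  · exact absurd e2 (by decide)
  · exact absurd e1 (by decide)
  · exact absurd e1 (by decide)
  · exact absurd e1 (by decide)
  · exact absurd e1 (by decide)
  · exact absurd e2 (by decide)
  · exact absurd hlt (not_lt.2 (p2 x y z (Set.mem_Icc.2 ⟨by omega, hx.2⟩)
      (Set.mem_Icc.2 ⟨by omega, hy.2⟩) (Set.mem_Icc.2 ⟨by omega, hz.2⟩)))
end

section
/- Let a,b,c,d be integers with a ≤ b < 0 < c and a+b+c+d ≥ 0, and set k₁ = ⌊(c+d)/(-a-b)⌋ + 1 and k₂ = ⌊(c·k₁+d)/(-a-b)⌋ + 1 (floors of rationals). Then every coloring χ:{1,…,k₂}→ℤ/3ℤ admits integers x,y,z ∈ {1,…,k₂} with ax+by+cz+d < 0 and χ(x)+χ(y)+χ(z) = 0 in ℤ/3ℤ. -/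
/-- Case 2 upper bound: with `a ≤ b < 0 < c`, `a+b+c+d ≥ 0`,
`k₁ = ⌊(c+d)/(-a-b)⌋+1`, `k₂ = ⌊(c·k₁+d)/(-a-b)⌋+1`, every
(ℤ/3ℤ)-coloring of `{1,…,k₂}` admits a zero-sum solution of ℒ₃. -/
theorem case2_upper_bound (a b c d k₁ k₂ : ℤ) (hab : a ≤ b) (hb : b < 0) (hc : 0 < c)
    (hσ : 0 ≤ a + b + c + d)
    (hk₁ : k₁ = ⌊((c + d : ℤ) : ℚ) / ((-a - b : ℤ) : ℚ)⌋ + 1)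
    (hk₂ : k₂ = ⌊((c * k₁ + d : ℤ) : ℚ) / ((-a - b : ℤ) : ℚ)⌋ + 1) :
    ∀ χ : ℤ → ZMod 3, ∃ x y z : ℤ,
      x ∈ Set.Icc 1 k₂ ∧ y ∈ Set.Icc 1 k₂ ∧ z ∈ Set.Icc 1 k₂ ∧
      a * x + b * y + c * z + d < 0 ∧ χ x + χ y + χ z = 0 := by
  intro χ
  have hq : (0:ℤ) < -a - b := by linarith
  have hqQ : (0:ℚ) < ((-a - b : ℤ) : ℚ) := by exact_mod_cast hq
  have h1 : c + d < (-a - b) * k₁ := by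
    have h := Int.lt_floor_add_one (((c + d : ℤ) : ℚ) / ((-a - b : ℤ) : ℚ))
    rw [div_lt_iff₀ hqQ] at h
    have h' : ((c + d : ℤ) : ℚ) < ((-a - b : ℤ) : ℚ) * ((k₁ : ℤ) : ℚ) := by
      rw [hk₁]; push_cast at h ⊢; linarith
    exact_mod_cast h'
  have h2 : c * k₁ + d < (-a - b) * k₂ := by
    have h := Int.lt_floor_add_one (((c * k₁ + d : ℤ) : ℚ) / ((-a - b : ℤ) : ℚ))
    rw [div_lt_iff₀ hqQ] at h
    have h' : ((c * k₁ + d : ℤ) : ℚ) < ((-a - b : ℤ) : ℚ) * ((k₂ : ℤ) : ℚ) := by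
      rw [hk₂]; push_cast at h ⊢; linarith
    exact_mod_cast h'
  have h3 : (-a - b) * (k₁ - 1) ≤ c + d := by
    have h := Int.floor_le (((c + d : ℤ) : ℚ) / ((-a - b : ℤ) : ℚ))
    rw [le_div_iff₀ hqQ] at h
    have h' : ((-a - b : ℤ) : ℚ) * ((k₁ - 1 : ℤ) : ℚ) ≤ ((c + d : ℤ) : ℚ) := by
      rw [hk₁]; push_cast at h ⊢; linarith
    exact_mod_cast h'
  have hk1pos : 1 ≤ k₁ := by
    have h : (1 : ℤ) ≤ ⌊((c + d : ℤ) : ℚ) / ((-a - b : ℤ) : ℚ)⌋ := by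
      rw [Int.le_floor]
      rw [le_div_iff₀ hqQ]
      push_cast
      have : (a:ℚ) + b + c + d ≥ 0 := by exact_mod_cast hσ
      linarith
    omega
  have hk2k1 : k₁ ≤ k₂ := by
    have hck : c ≤ c * k₁ := by nlinarith
    have : (-a - b) * (k₁ - 1) < (-a - b) * k₂ := by linarith
    have := lt_of_mul_lt_mul_left this hq.le
    omega
  by_cases h : ∃ x ∈ Set.Icc k₁ k₂, ∃ y ∈ Set.Icc k₁ k₂, χ x + χ y + χ 1 = 0
  · obtain ⟨x, hx, y, hy, hsum⟩ := h
    refine ⟨x, y, 1, ⟨by linarith [hx.1], hx.2⟩, ⟨by linarith [hy.1], hy.2⟩,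
      ⟨le_refl 1, by linarith⟩, ?_, hsum⟩
    have hax : a * x ≤ a * k₁ := mul_le_mul_of_nonpos_left hx.1 (by linarith)
    have hby : b * y ≤ b * k₁ := mul_le_mul_of_nonpos_left hy.1 (by linarith)
    linarith
  · push_neg at h
    have m1 : k₁ ∈ Set.Icc k₁ k₂ := ⟨le_refl _, hk2k1⟩
    have m2 : k₂ ∈ Set.Icc k₁ k₂ := ⟨hk2k1, le_refl _⟩
    have e12 := h k₁ m1 k₂ m2
    have e11 := h k₁ m1 k₁ m1
    have e22 := h k₂ m2 k₂ m2
    have key : ∀ u v w : ZMod 3, u + v + w ≠ 0 → u + u + w ≠ 0 → v + v + w ≠ 0 → u = v := by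
      decide
    have heq : χ k₁ = χ k₂ := key _ _ _ e12 e11 e22
    refine ⟨k₂, k₂, k₁, ⟨by linarith, le_refl _⟩, ⟨by linarith, le_refl _⟩,
      ⟨hk1pos, hk2k1⟩, by linarith, ?_⟩
    rw [heq]
    have : ∀ u : ZMod 3, u + u + u = 0 := by decide
    exact this _
end

section
/- Let a,b,c,d be integers with a ≤ b < 0 < c and a+b+c+d ≥ 0, and set k₁ = ⌊(c+d)/(-a-b)⌋ + 1 and k₂ = ⌊(c·k₁+d)/(-a-b)⌋ + 1 (floors of rationals). Then R(ℒ₃,2) = R(ℒ₃,ℤ/3ℤ) = k₂, i.e., the least n that is 2-good for ℒ₃ equals k₂ and the least n that is (ℤ/3ℤ)-good for ℒ₃ equals k₂. -/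
lemma noSolAux (a b c d k₁ k₂ x y z : ℤ) (hab : a ≤ b) (hb : b < 0) (hc : 0 < c)
    (h1 : (k₁ - 1) * (-a - b) ≤ c + d) (h3 : (k₂ - 1) * (-a - b) ≤ c * k₁ + d)
    (hx1 : 1 ≤ x) (hy1 : 1 ≤ y) (hz1 : 1 ≤ z)
    (hxn : x ≤ k₂ - 1) (hyn : y ≤ k₂ - 1)
    (hside : (x < k₁ ∧ y < k₁ ∧ z < k₁) ∨ (k₁ ≤ x ∧ k₁ ≤ y ∧ k₁ ≤ z)) :
    0 ≤ a * x + b * y + c * z + d := by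
  rcases hside with ⟨hx, hy, hz⟩ | ⟨hx, hy, hz⟩
  · nlinarith [mul_nonneg (by linarith : (0:ℤ) ≤ -a) (by linarith : (0:ℤ) ≤ k₁ - 1 - x),
      mul_nonneg (by linarith : (0:ℤ) ≤ -b) (by linarith : (0:ℤ) ≤ k₁ - 1 - y),
      mul_nonneg (by linarith : (0:ℤ) ≤ c) (by linarith : (0:ℤ) ≤ z - 1)]
  · nlinarith [mul_nonneg (by linarith : (0:ℤ) ≤ -a) (by linarith : (0:ℤ) ≤ k₂ - 1 - x),
      mul_nonneg (by linarith : (0:ℤ) ≤ -b) (by linarith : (0:ℤ) ≤ k₂ - 1 - y),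
      mul_nonneg (by linarith : (0:ℤ) ≤ c) (by linarith : (0:ℤ) ≤ z - k₁)]

/-- Theorem thm:L3, case `a ≤ b < 0 < c`, `a+b+c+d ≥ 0`:
`R(ℒ₃,2) = R(ℒ₃,ℤ/3ℤ) = k₂` where `k₁ = ⌊(c+d)/(-a-b)⌋+1` and
`k₂ = ⌊(c·k₁+d)/(-a-b)⌋+1`. -/
theorem rado_L3_case2 (a b c d k₁ k₂ : ℤ) (hab : a ≤ b) (hb : b < 0) (hc : 0 < c)
    (hσ : 0 ≤ a + b + c + d)
    (hk₁ : k₁ = ⌊((c + d : ℤ) : ℚ) / ((-a - b : ℤ) : ℚ)⌋ + 1)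
    (hk₂ : k₂ = ⌊((c * k₁ + d : ℤ) : ℚ) / ((-a - b : ℤ) : ℚ)⌋ + 1) :
    IsLeast {n : ℤ | TwoGood a b c d n} k₂ ∧
      IsLeast {n : ℤ | ZGood a b c d n} k₂ := by
  have hs : (0:ℤ) < -a - b := by linarith
  have hsQ : (0:ℚ) < ((-a - b : ℤ) : ℚ) := by exact_mod_cast hs
  -- floor facts for k₁
  have h1 : (k₁ - 1) * (-a - b) ≤ c + d := by
    have : ((k₁ - 1 : ℤ) : ℚ) ≤ ((c + d : ℤ) : ℚ) / ((-a - b : ℤ) : ℚ) := by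
      have : ((k₁ - 1 : ℤ) : ℚ) = (⌊((c + d : ℤ) : ℚ) / ((-a - b : ℤ) : ℚ)⌋ : ℚ) := by
        rw [hk₁]; push_cast; ring
      rw [this]; exact Int.floor_le _
    rw [le_div_iff₀ hsQ] at this
    exact_mod_cast this
  have h2 : c + d < k₁ * (-a - b) := by
    have := Int.lt_floor_add_one (((c + d : ℤ) : ℚ) / ((-a - b : ℤ) : ℚ))
    have hlt : ((c + d : ℤ) : ℚ) / ((-a - b : ℤ) : ℚ) < ((k₁ : ℤ) : ℚ) := by
      rw [hk₁]; push_cast; push_cast at this; linarith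
    rw [div_lt_iff₀ hsQ] at hlt
    exact_mod_cast hlt
  -- floor facts for k₂
  have h3 : (k₂ - 1) * (-a - b) ≤ c * k₁ + d := by
    have : ((k₂ - 1 : ℤ) : ℚ) ≤ ((c * k₁ + d : ℤ) : ℚ) / ((-a - b : ℤ) : ℚ) := by
      have : ((k₂ - 1 : ℤ) : ℚ) = (⌊((c * k₁ + d : ℤ) : ℚ) / ((-a - b : ℤ) : ℚ)⌋ : ℚ) := by
        rw [hk₂]; push_cast; ring
      rw [this]; exact Int.floor_le _
    rw [le_div_iff₀ hsQ] at this
    exact_mod_cast this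
  have h4 : c * k₁ + d < k₂ * (-a - b) := by
    have := Int.lt_floor_add_one (((c * k₁ + d : ℤ) : ℚ) / ((-a - b : ℤ) : ℚ))
    have hlt : ((c * k₁ + d : ℤ) : ℚ) / ((-a - b : ℤ) : ℚ) < ((k₂ : ℤ) : ℚ) := by
      rw [hk₂]; push_cast; push_cast at this; linarith
    rw [div_lt_iff₀ hsQ] at hlt
    exact_mod_cast hlt
  -- basic size facts
  have hcd : -a - b ≤ c + d := by linarith
  have hk₁2 : 2 ≤ k₁ := by nlinarith
  have hck : c ≤ c * k₁ := by nlinarith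
  have hk₁k₂ : k₁ ≤ k₂ := by nlinarith
  have hk₂2 : 2 ≤ k₂ := by linarith
  -- the four solutions
  have S1 : a * k₁ + b * k₁ + c * 1 + d < 0 := by nlinarith
  have S2 : a * k₂ + b * k₂ + c * k₁ + d < 0 := by nlinarith
  have S3 : a * k₂ + b * k₂ + c * 1 + d < 0 := by nlinarith
  have S4 : a * k₂ + b * k₁ + c * 1 + d < 0 := by
    nlinarith [mul_nonneg (by linarith : (0:ℤ) ≤ -a) (by linarith : (0:ℤ) ≤ k₂ - k₁)]
  have m1 : (1:ℤ) ∈ Set.Icc 1 k₂ := by constructor <;> linarith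
  have mk₁ : k₁ ∈ Set.Icc 1 k₂ := by constructor <;> linarith
  have mk₂ : k₂ ∈ Set.Icc 1 k₂ := by constructor <;> linarith
  constructor
  · constructor
    · -- k₂ is 2-good
      refine ⟨by linarith, fun χ => ?_⟩
      by_cases h12 : χ 1 = χ k₁
      · exact ⟨k₁, k₁, 1, mk₁, mk₁, m1, S1, rfl, h12.symm⟩
      · by_cases h23 : χ k₁ = χ k₂
        · exact ⟨k₂, k₂, k₁, mk₂, mk₂, mk₁, S2, rfl, h23.symm⟩
        · have h13 : χ 1 = χ k₂ := by
            have a1 := (χ 1).2; have a2 := (χ k₁).2; have a3 := (χ k₂).2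
            rw [Fin.ext_iff] at h12 h23 ⊢; omega
          exact ⟨k₂, k₂, 1, mk₂, mk₂, m1, S3, rfl, h13.symm⟩
    · -- lower bound for 2-good
      intro n hn
      obtain ⟨hn0, hχ⟩ := hn
      by_contra hlt
      push_neg at hlt
      have hn' : n ≤ k₂ - 1 := by linarith
      obtain ⟨x, y, z, hx, hy, hz, hineq, e1, e2⟩ :=
        hχ (fun t => if t < k₁ then (0 : Fin 2) else 1)
      have key : ∀ u v : ℤ, (if u < k₁ then (0:Fin 2) else 1) = (if v < k₁ then (0:Fin 2) else 1) →
          (u < k₁ ↔ v < k₁) := by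
        intro u v h
        by_cases hu : u < k₁ <;> by_cases hv : v < k₁
        · tauto
        · rw [if_pos hu, if_neg hv] at h; exact absurd h (by decide)
        · rw [if_neg hu, if_pos hv] at h; exact absurd h (by decide)
        · tauto
      have kxy := key _ _ e1
      have kyz := key _ _ e2
      obtain ⟨hx1, hxn⟩ := hx
      obtain ⟨hy1, hyn⟩ := hy
      obtain ⟨hz1, hzn⟩ := hz
      have hside : (x < k₁ ∧ y < k₁ ∧ z < k₁) ∨ (k₁ ≤ x ∧ k₁ ≤ y ∧ k₁ ≤ z) := by
        by_cases hxk : x < k₁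
        · left; exact ⟨hxk, kxy.mp hxk, kyz.mp (kxy.mp hxk)⟩
        · right
          refine ⟨by omega, ?_, ?_⟩
          · by_contra hyk; push_neg at hyk; exact hxk (kxy.mpr (by omega))
          · by_contra hzk; push_neg at hzk
            exact hxk (kxy.mpr (kyz.mpr (by omega)))
      have := noSolAux a b c d k₁ k₂ x y z hab hb hc h1 h3 hx1 hy1 hz1
        (by linarith) (by linarith) hside
      linarith
  · constructor
    · -- k₂ is ZMod 3 good
      refine ⟨by linarith, fun χ => ?_⟩
      have triple : ∀ u : ZMod 3, u + u + u = 0 := by decide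
      by_cases h12 : χ 1 = χ k₁
      · exact ⟨k₁, k₁, 1, mk₁, mk₁, m1, S1, by rw [← h12]; exact triple _⟩
      · by_cases h23 : χ k₁ = χ k₂
        · exact ⟨k₂, k₂, k₁, mk₂, mk₂, mk₁, S2, by rw [← h23]; exact triple _⟩
        · by_cases h13 : χ 1 = χ k₂
          · exact ⟨k₂, k₂, 1, mk₂, mk₂, m1, S3, by rw [← h13]; exact triple _⟩
          · have hsum : χ k₂ + χ k₁ + χ 1 = 0 := by
              have : ∀ u v w : ZMod 3, u ≠ v → v ≠ w → u ≠ w → w + v + u = 0 := by decide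
              exact this (χ 1) (χ k₁) (χ k₂) h12 h23 h13
            exact ⟨k₂, k₁, 1, mk₂, mk₁, m1, S4, hsum⟩
    · -- lower bound for ZMod 3 good
      intro n hn
      obtain ⟨hn0, hχ⟩ := hn
      by_contra hlt
      push_neg at hlt
      have hn' : n ≤ k₂ - 1 := by linarith
      obtain ⟨x, y, z, hx, hy, hz, hineq, esum⟩ :=
        hχ (fun t => if t < k₁ then (0 : ZMod 3) else 1)
      obtain ⟨hx1, hxn⟩ := hx
      obtain ⟨hy1, hyn⟩ := hy
      obtain ⟨hz1, hzn⟩ := hz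
      have hside : (x < k₁ ∧ y < k₁ ∧ z < k₁) ∨ (k₁ ≤ x ∧ k₁ ≤ y ∧ k₁ ≤ z) := by
        by_cases hu : x < k₁ <;> by_cases hv : y < k₁ <;> by_cases hw : z < k₁
        · left; exact ⟨hu, hv, hw⟩
        · rw [if_pos hu, if_pos hv, if_neg hw] at esum; exact absurd esum (by decide)
        · rw [if_pos hu, if_neg hv, if_pos hw] at esum; exact absurd esum (by decide)
        · rw [if_pos hu, if_neg hv, if_neg hw] at esum; exact absurd esum (by decide)
        · rw [if_neg hu, if_pos hv, if_pos hw] at esum; exact absurd esum (by decide)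
        · rw [if_neg hu, if_pos hv, if_neg hw] at esum; exact absurd esum (by decide)
        · rw [if_neg hu, if_neg hv, if_pos hw] at esum; exact absurd esum (by decide)
        · right; omega
      have := noSolAux a b c d k₁ k₂ x y z hab hb hc h1 h3 hx1 hy1 hz1
        (by linarith) (by linarith) hside
      linarith
end

section
/- Let a,b,c,d be integers with a < 0 < b ≤ c and a+b+c+d ≥ 0, and set k₃ = ⌊(b+c+d)/(-a)⌋ + 1 and k₄ = ⌊((b+c)·k₃+d)/(-a)⌋ + 1 (floors of rationals). Then: (i) for all integers x,y,z with 1 ≤ x,y,z ≤ k₃-1, ax+by+cz+d ≥ 0; and (ii) for all integers x,y,z with k₃ ≤ x,y,z ≤ k₄-1, ax+by+cz+d ≥ 0. Consequently the 2-coloring of {1,…,k₄-1} assigning color 0 to {1,…,k₃-1} and color 1 to {k₃,…,k₄-1} admits no monochromatic triple (x,y,z) with ax+by+cz+d < 0. -/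
lemma mul_floor_div_le (p q : ℤ) (hq : 0 < q) : q * ⌊((p : ℤ) : ℚ) / ((q : ℤ) : ℚ)⌋ ≤ p := by
  have hq' : (0 : ℚ) < (q : ℚ) := by exact_mod_cast hq
  have h := Int.floor_le ((p : ℚ) / (q : ℚ))
  have h2 : (⌊((p : ℚ)) / ((q : ℚ))⌋ : ℚ) * (q : ℚ) ≤ (p : ℚ) := (le_div_iff₀ hq').mp h
  have : ((q * ⌊((p : ℚ)) / ((q : ℚ))⌋ : ℤ) : ℚ) ≤ ((p : ℤ) : ℚ) := by push_cast; linarith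
  exact_mod_cast this

/-- Case 3 lower bound: with `a < 0 < b ≤ c`, `a+b+c+d ≥ 0`,
`k₃ = ⌊(b+c+d)/(-a)⌋+1`, `k₄ = ⌊((b+c)·k₃+d)/(-a)⌋+1`, every triple from
`[1,k₃-1]` and every triple from `[k₃,k₄-1]` fails ℒ₃, so the 2-coloring of
`[1,k₄-1]` with color 0 on `[1,k₃-1]` and color 1 on `[k₃,k₄-1]` admits no
monochromatic solution of ℒ₃. -/
theorem case3_lower_bound (a b c d k₃ k₄ : ℤ) (ha : a < 0) (hb : 0 < b) (hbc : b ≤ c)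
    (hσ : 0 ≤ a + b + c + d)
    (hk₃ : k₃ = ⌊((b + c + d : ℤ) : ℚ) / ((-a : ℤ) : ℚ)⌋ + 1)
    (hk₄ : k₄ = ⌊(((b + c) * k₃ + d : ℤ) : ℚ) / ((-a : ℤ) : ℚ)⌋ + 1) :
    (∀ x y z : ℤ, x ∈ Set.Icc 1 (k₃ - 1) → y ∈ Set.Icc 1 (k₃ - 1) →
      z ∈ Set.Icc 1 (k₃ - 1) → 0 ≤ a * x + b * y + c * z + d) ∧
    (∀ x y z : ℤ, x ∈ Set.Icc k₃ (k₄ - 1) → y ∈ Set.Icc k₃ (k₄ - 1) →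
      z ∈ Set.Icc k₃ (k₄ - 1) → 0 ≤ a * x + b * y + c * z + d) ∧
    (∀ x y z : ℤ, x ∈ Set.Icc 1 (k₄ - 1) → y ∈ Set.Icc 1 (k₄ - 1) →
      z ∈ Set.Icc 1 (k₄ - 1) →
      ((if x ≤ k₃ - 1 then (0 : Fin 2) else 1) = (if y ≤ k₃ - 1 then (0 : Fin 2) else 1) ∧
       (if y ≤ k₃ - 1 then (0 : Fin 2) else 1) = (if z ≤ k₃ - 1 then (0 : Fin 2) else 1)) →
      ¬ (a * x + b * y + c * z + d < 0)) := by
  have hna : 0 < -a := by omega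
  have h1 : (-a) * (k₃ - 1) ≤ b + c + d := by
    have h := mul_floor_div_le (b + c + d) (-a) hna
    rw [hk₃]; simpa using h
  have h2 : (-a) * (k₄ - 1) ≤ (b + c) * k₃ + d := by
    have h := mul_floor_div_le ((b + c) * k₃ + d) (-a) hna
    rw [hk₄]; simpa using h
  have P1 : ∀ x y z : ℤ, x ∈ Set.Icc 1 (k₃ - 1) → y ∈ Set.Icc 1 (k₃ - 1) →
      z ∈ Set.Icc 1 (k₃ - 1) → 0 ≤ a * x + b * y + c * z + d := by
    intro x y z hx hy hz
    obtain ⟨hx1, hx2⟩ := hx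
    obtain ⟨hy1, hy2⟩ := hy
    obtain ⟨hz1, hz2⟩ := hz
    nlinarith [mul_le_mul_of_nonpos_left hx2 ha.le, mul_le_mul_of_nonneg_left hy1 hb.le,
      mul_le_mul_of_nonneg_left hz1 (by linarith : (0:ℤ) ≤ c)]
  have P2 : ∀ x y z : ℤ, x ∈ Set.Icc k₃ (k₄ - 1) → y ∈ Set.Icc k₃ (k₄ - 1) →
      z ∈ Set.Icc k₃ (k₄ - 1) → 0 ≤ a * x + b * y + c * z + d := by
    intro x y z hx hy hz
    obtain ⟨hx1, hx2⟩ := hx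
    obtain ⟨hy1, hy2⟩ := hy
    obtain ⟨hz1, hz2⟩ := hz
    nlinarith [mul_le_mul_of_nonpos_left hx2 ha.le, mul_le_mul_of_nonneg_left hy1 hb.le,
      mul_le_mul_of_nonneg_left hz1 (by linarith : (0:ℤ) ≤ c)]
  refine ⟨P1, P2, ?_⟩
  intro x y z hx hy hz hmono
  obtain ⟨h1', h2'⟩ := hmono
  by_cases hxc : x ≤ k₃ - 1
  · by_cases hyc : y ≤ k₃ - 1
    · by_cases hzc : z ≤ k₃ - 1
      · exact not_lt.mpr (P1 x y z ⟨hx.1, hxc⟩ ⟨hy.1, hyc⟩ ⟨hz.1, hzc⟩)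
      · simp [hxc, hyc, hzc] at h2'
    · simp [hxc, hyc] at h1'
  · by_cases hyc : y ≤ k₃ - 1
    · simp [hxc, hyc] at h1'
    · by_cases hzc : z ≤ k₃ - 1
      · simp [hyc, hzc] at h2'
      · exact not_lt.mpr (P2 x y z ⟨by omega, hx.2⟩ ⟨by omega, hy.2⟩ ⟨by omega, hz.2⟩)
end

section
/- Let a,b,c,d be integers with a < 0 < b ≤ c and a+b+c+d ≥ 0, and set k₃ = ⌊(b+c+d)/(-a)⌋ + 1 and k₄ = ⌊((b+c)·k₃+d)/(-a)⌋ + 1 (floors of rationals). Then every coloring χ:{1,…,k₄}→ℤ/3ℤ admits integers x,y,z ∈ {1,…,k₄} with ax+by+cz+d < 0 and χ(x)+χ(y)+χ(z) = 0 in ℤ/3ℤ. -/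
lemma floor_div_bounds (p q : ℤ) (hq : 0 < q) :
    q * ⌊((p : ℤ) : ℚ) / ((q : ℤ) : ℚ)⌋ ≤ p ∧ p < q * (⌊((p : ℤ) : ℚ) / ((q : ℤ) : ℚ)⌋ + 1) := by
  have hq' : (0 : ℚ) < (q : ℚ) := by exact_mod_cast hq
  constructor
  · have h := Int.floor_le (((p : ℤ) : ℚ) / ((q : ℤ) : ℚ))
    have : (q : ℚ) * (⌊((p : ℤ) : ℚ) / ((q : ℤ) : ℚ)⌋ : ℚ) ≤ p := by
      rw [mul_comm]
      exact (le_div_iff₀ hq').mp h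
    exact_mod_cast this
  · have h := Int.lt_floor_add_one (((p : ℤ) : ℚ) / ((q : ℤ) : ℚ))
    have : (p : ℚ) < (q : ℚ) * ((⌊((p : ℤ) : ℚ) / ((q : ℤ) : ℚ)⌋ : ℚ) + 1) := by
      rw [mul_comm]
      exact (div_lt_iff₀ hq').mp h
    exact_mod_cast this

/-- Case 3 upper bound: with `a < 0 < b ≤ c`, `a+b+c+d ≥ 0`,
`k₃ = ⌊(b+c+d)/(-a)⌋+1`, `k₄ = ⌊((b+c)·k₃+d)/(-a)⌋+1`, every
(ℤ/3ℤ)-coloring of `{1,…,k₄}` admits a zero-sum solution of ℒ₃. -/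
theorem case3_upper_bound (a b c d k₃ k₄ : ℤ) (ha : a < 0) (hb : 0 < b) (hbc : b ≤ c)
    (hσ : 0 ≤ a + b + c + d)
    (hk₃ : k₃ = ⌊((b + c + d : ℤ) : ℚ) / ((-a : ℤ) : ℚ)⌋ + 1)
    (hk₄ : k₄ = ⌊(((b + c) * k₃ + d : ℤ) : ℚ) / ((-a : ℤ) : ℚ)⌋ + 1) :
    ∀ χ : ℤ → ZMod 3, ∃ x y z : ℤ,
      x ∈ Set.Icc 1 k₄ ∧ y ∈ Set.Icc 1 k₄ ∧ z ∈ Set.Icc 1 k₄ ∧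
      a * x + b * y + c * z + d < 0 ∧ χ x + χ y + χ z = 0 := by
  intro χ
  have hna : (0 : ℤ) < -a := by linarith
  obtain ⟨h3l, h3r⟩ := floor_div_bounds (b + c + d) (-a) hna
  obtain ⟨h4l, h4r⟩ := floor_div_bounds ((b + c) * k₃ + d) (-a) hna
  rw [← hk₃] at h3r
  have h3l' : (-a) * (k₃ - 1) ≤ b + c + d := by rw [hk₃]; linarith [h3l]
  rw [← hk₄] at h4r
  -- k₃ ≥ 2
  have hk3ge : 2 ≤ k₃ := by nlinarith
  -- k₄ ≥ k₃
  have hk4ge : k₃ ≤ k₄ := by nlinarith [mul_pos hna (sub_pos.mpr (show (1:ℤ) < k₃ by linarith))]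
  -- key inequalities
  have I₁ : a * k₃ + b + c + d < 0 := by linarith
  have I₂ : a * k₄ + b * k₃ + c * k₃ + d < 0 := by nlinarith
  have hak : a * k₄ ≤ a * k₃ := by nlinarith
  have hm1 : (1 : ℤ) ∈ Set.Icc 1 k₄ := ⟨le_refl 1, by linarith⟩
  have hm3 : k₃ ∈ Set.Icc 1 k₄ := ⟨by linarith, hk4ge⟩
  have hm4 : k₄ ∈ Set.Icc 1 k₄ := ⟨by linarith, le_refl _⟩
  have tri : ∀ x : ZMod 3, x + x + x = 0 := by decide
  by_cases h41 : χ k₄ = χ 1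
  · exact ⟨k₄, 1, 1, hm4, hm1, hm1, by linarith, by rw [h41]; exact tri _⟩
  by_cases h43 : χ k₄ = χ k₃
  · refine ⟨k₄, k₃, k₃, hm4, hm3, hm3, by linarith, by rw [h43]; exact tri _⟩
  by_cases h31 : χ k₃ = χ 1
  · refine ⟨k₃, 1, 1, hm3, hm1, hm1, by linarith, by rw [h31]; exact tri _⟩
  · have hdist : ∀ x y z : ZMod 3, x ≠ y → x ≠ z → y ≠ z → x + y + z = 0 := by decide
    refine ⟨k₄, k₃, 1, hm4, hm3, hm1, by nlinarith, hdist _ _ _ h43 h41 h31⟩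
end

section
/- Let a,b,c,d be integers with a < 0 < b ≤ c and a+b+c+d ≥ 0, and set k₃ = ⌊(b+c+d)/(-a)⌋ + 1 and k₄ = ⌊((b+c)·k₃+d)/(-a)⌋ + 1 (floors of rationals). Then R(ℒ₃,2) = R(ℒ₃,ℤ/3ℤ) = k₄, i.e., the least n that is 2-good for ℒ₃ equals k₄ and the least n that is (ℤ/3ℤ)-good for ℒ₃ equals k₄. -/
private lemma floor_facts' (p q k : ℤ) (hq : 0 < q)
    (hk : k = ⌊((p : ℤ) : ℚ) / ((q : ℤ) : ℚ)⌋ + 1) :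
    q * (k - 1) ≤ p ∧ p < q * k := by
  have hq' : (0:ℚ) < (q:ℚ) := by exact_mod_cast hq
  constructor
  · have h := Int.floor_le ((p:ℚ)/(q:ℚ))
    rw [show ⌊(p:ℚ)/(q:ℚ)⌋ = k - 1 by omega] at h
    have h2 := (le_div_iff₀ hq').mp h
    have h3 : ((k-1)*q : ℤ) ≤ p := by exact_mod_cast h2
    linarith
  · have h := Int.lt_floor_add_one ((p:ℚ)/(q:ℚ))
    rw [show ⌊(p:ℚ)/(q:ℚ)⌋ = k - 1 by omega] at h
    have h' : (p:ℚ)/(q:ℚ) < ((k:ℤ):ℚ) := by push_cast at h ⊢; linarith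
    have h2 := (div_lt_iff₀ hq').mp h'
    have h3 : (p:ℤ) < k*q := by exact_mod_cast h2
    linarith

private lemma fin2_key : ∀ u v w : Bool,
    ((if u = true then (0:Fin 2) else 1) = if v = true then 0 else 1) →
    ((if v = true then (0:Fin 2) else 1) = if w = true then 0 else 1) →
    (u = true ∧ v = true ∧ w = true) ∨ (¬u = true ∧ ¬v = true ∧ ¬w = true) := by
  decide

private lemma zmod3_key : ∀ u v w : Bool,
    ((if u = true then (0:ZMod 3) else 1) + (if v = true then 0 else 1)
      + (if w = true then 0 else 1) = 0) →
    (u = true ∧ v = true ∧ w = true) ∨ (¬u = true ∧ ¬v = true ∧ ¬w = true) := by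
  decide

private lemma zmod3_cover : ∀ u v w : ZMod 3,
    v + u + u = 0 ∨ w + v + v = 0 ∨ w + u + u = 0 ∨ w + u + v = 0 := by
  decide

/-- Theorem thm:L3, case `a < 0 < b ≤ c`, `a+b+c+d ≥ 0`:
`R(ℒ₃,2) = R(ℒ₃,ℤ/3ℤ) = k₄` where `k₃ = ⌊(b+c+d)/(-a)⌋+1` and
`k₄ = ⌊((b+c)·k₃+d)/(-a)⌋+1`. -/
theorem rado_L3_case3 (a b c d k₃ k₄ : ℤ) (ha : a < 0) (hb : 0 < b) (hbc : b ≤ c)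
    (hσ : 0 ≤ a + b + c + d)
    (hk₃ : k₃ = ⌊((b + c + d : ℤ) : ℚ) / ((-a : ℤ) : ℚ)⌋ + 1)
    (hk₄ : k₄ = ⌊(((b + c) * k₃ + d : ℤ) : ℚ) / ((-a : ℤ) : ℚ)⌋ + 1) :
    IsLeast {n : ℤ | TwoGood a b c d n} k₄ ∧
      IsLeast {n : ℤ | ZGood a b c d n} k₄ := by
  have hm0 : (0:ℤ) < -a := by linarith
  obtain ⟨F1a, F1b⟩ := floor_facts' (b + c + d) (-a) k₃ hm0 hk₃
  obtain ⟨F2a, F2b⟩ := floor_facts' ((b + c) * k₃ + d) (-a) k₄ hm0 hk₄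
  have hc : 0 < c := lt_of_lt_of_le hb hbc
  have hk₃2 : 2 ≤ k₃ := by nlinarith
  have hk₃k₄ : k₃ ≤ k₄ := by
    nlinarith [mul_nonneg (by linarith : (0:ℤ) ≤ b + c) (by linarith : (0:ℤ) ≤ k₃ - 1)]
  -- solution inequalities
  have s1 : a * k₃ + b * 1 + c * 1 + d < 0 := by linarith
  have s2 : a * k₄ + b * k₃ + c * k₃ + d < 0 := by linarith
  have s3 : a * k₄ + b * 1 + c * 1 + d < 0 := by
    nlinarith [mul_nonneg (by linarith : (0:ℤ) ≤ b + c) (by linarith : (0:ℤ) ≤ k₃ - 1)]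
  have s4 : a * k₄ + b * 1 + c * k₃ + d < 0 := by
    nlinarith [mul_nonneg hb.le (by linarith : (0:ℤ) ≤ k₃ - 1)]
  have m1 : (1:ℤ) ∈ Set.Icc 1 k₄ := Set.mem_Icc.mpr ⟨le_refl _, by linarith⟩
  have m3 : k₃ ∈ Set.Icc 1 k₄ := Set.mem_Icc.mpr ⟨by linarith, hk₃k₄⟩
  have m4 : k₄ ∈ Set.Icc 1 k₄ := Set.mem_Icc.mpr ⟨by linarith, le_refl _⟩
  have hk₄pos : (0:ℤ) < k₄ := by linarith
  -- no same-side solution below k₄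
  have nosol : ∀ n x y z : ℤ, n ≤ k₄ - 1 → x ∈ Set.Icc 1 n → y ∈ Set.Icc 1 n →
      z ∈ Set.Icc 1 n → a * x + b * y + c * z + d < 0 →
      ((x < k₃ ∧ y < k₃ ∧ z < k₃) ∨ (¬ x < k₃ ∧ ¬ y < k₃ ∧ ¬ z < k₃)) → False := by
    intro n x y z hn hx hy hz hsol hside
    rw [Set.mem_Icc] at hx hy hz
    rcases hside with ⟨px, py, pz⟩ | ⟨px, py, pz⟩
    · have p1 : 0 ≤ (-a) * (k₃ - 1 - x) := mul_nonneg (by linarith) (by omega)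
      have p2 : 0 ≤ b * (y - 1) := mul_nonneg hb.le (by omega)
      have p3 : 0 ≤ c * (z - 1) := mul_nonneg hc.le (by omega)
      nlinarith
    · have p1 : 0 ≤ (-a) * (k₄ - 1 - x) := mul_nonneg (by linarith) (by omega)
      have p2 : 0 ≤ b * (y - k₃) := mul_nonneg hb.le (by omega)
      have p3 : 0 ≤ c * (z - k₃) := mul_nonneg hc.le (by omega)
      nlinarith
  constructor
  · constructor
    · refine ⟨hk₄pos, fun χ => ?_⟩
      by_cases h1 : χ 1 = χ k₃
      · exact ⟨k₃, 1, 1, m3, m1, m1, s1, h1.symm, rfl⟩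
      by_cases h2 : χ k₃ = χ k₄
      · exact ⟨k₄, k₃, k₃, m4, m3, m3, s2, h2.symm, rfl⟩
      · have h3 : χ 1 = χ k₄ := by
          have : ∀ u v w : Fin 2, ¬ u = v → ¬ v = w → u = w := by decide
          exact this _ _ _ h1 h2
        exact ⟨k₄, 1, 1, m4, m1, m1, s3, h3.symm, rfl⟩
    · intro n hn
      obtain ⟨hn0, hχ⟩ := hn
      obtain ⟨x, y, z, hx, hy, hz, hsol, hχ1, hχ2⟩ :=
        hχ (fun t => if decide (t < k₃) = true then (0 : Fin 2) else 1)
      by_contra hlt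
      push_neg at hlt
      refine nosol n x y z (by omega) hx hy hz hsol ?_
      rcases fin2_key _ _ _ hχ1 hχ2 with ⟨hu, hv, hw⟩ | ⟨hu, hv, hw⟩
      · exact Or.inl ⟨of_decide_eq_true hu, of_decide_eq_true hv, of_decide_eq_true hw⟩
      · exact Or.inr ⟨fun h => hu (decide_eq_true h), fun h => hv (decide_eq_true h),
          fun h => hw (decide_eq_true h)⟩
  · constructor
    · refine ⟨hk₄pos, fun χ => ?_⟩
      rcases zmod3_cover (χ 1) (χ k₃) (χ k₄) with h | h | h | h
      · exact ⟨k₃, 1, 1, m3, m1, m1, s1, h⟩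
      · exact ⟨k₄, k₃, k₃, m4, m3, m3, s2, h⟩
      · exact ⟨k₄, 1, 1, m4, m1, m1, s3, h⟩
      · exact ⟨k₄, 1, k₃, m4, m1, m3, s4, h⟩
    · intro n hn
      obtain ⟨hn0, hχ⟩ := hn
      obtain ⟨x, y, z, hx, hy, hz, hsol, hsum⟩ :=
        hχ (fun t => if decide (t < k₃) = true then (0 : ZMod 3) else 1)
      by_contra hlt
      push_neg at hlt
      refine nosol n x y z (by omega) hx hy hz hsol ?_
      rcases zmod3_key _ _ _ hsum with ⟨hu, hv, hw⟩ | ⟨hu, hv, hw⟩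
      · exact Or.inl ⟨of_decide_eq_true hu, of_decide_eq_true hv, of_decide_eq_true hw⟩
      · exact Or.inr ⟨fun h => hu (decide_eq_true h), fun h => hv (decide_eq_true h),
          fun h => hw (decide_eq_true h)⟩
end

section
/- Let a,b,c,d be integers with abc ≠ 0, and suppose there exist positive integers x,y,z with ax+by+cz+d < 0. Then there exists a positive integer that is 2-good for ℒ₃, there exists a positive integer that is (ℤ/3ℤ)-good for ℒ₃, and R(ℒ₃,2) = R(ℒ₃,ℤ/3ℤ), i.e., the least 2-good n equals the least (ℤ/3ℤ)-good n (ℒ₃ admits an Erdős–Ginzburg–Ziv generalization). -/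
lemma zmod3_same : ∀ p : ZMod 3, p + p + p = 0 := by decide

lemma zmod3_distinct : ∀ p q r : ZMod 3, p ≠ q → p ≠ r → q ≠ r → p + q + r = 0 := by decide

lemma fin2_resolve : ∀ p q r : Fin 2, p ≠ q → p ≠ r → q = r := by decide

lemma fin2_sum : ∀ p q r : Fin 2,
    ((p : ℕ) : ZMod 3) + ((q : ℕ) : ZMod 3) + ((r : ℕ) : ZMod 3) = 0 → p = q ∧ q = r := by
  decide

lemma twoGood_swap12 {a b c d n : ℤ} (h : TwoGood a b c d n) : TwoGood b a c d n := by
  obtain ⟨hn, h⟩ := h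
  refine ⟨hn, fun χ => ?_⟩
  obtain ⟨x, y, z, hx, hy, hz, hlt, e1, e2⟩ := h χ
  exact ⟨y, x, z, hy, hx, hz, by linarith, e1.symm, e1.trans e2⟩

lemma twoGood_swap13 {a b c d n : ℤ} (h : TwoGood a b c d n) : TwoGood c b a d n := by
  obtain ⟨hn, h⟩ := h
  refine ⟨hn, fun χ => ?_⟩
  obtain ⟨x, y, z, hx, hy, hz, hlt, e1, e2⟩ := h χ
  exact ⟨z, y, x, hz, hy, hx, by linarith, e2.symm, e1.symm⟩

lemma twoGood_swap23 {a b c d n : ℤ} (h : TwoGood a b c d n) : TwoGood a c b d n := by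
  obtain ⟨hn, h⟩ := h
  refine ⟨hn, fun χ => ?_⟩
  obtain ⟨x, y, z, hx, hy, hz, hlt, e1, e2⟩ := h χ
  exact ⟨x, z, y, hx, hz, hy, by linarith, e1.trans e2, e2.symm⟩

/-- Core of `TwoGood → ZGood`: when the first two coordinates can both be
replaced by a common extreme value `w`. -/
lemma core_xy (a b c d n w : ℤ) (hn : TwoGood a b c d n) (χ : ℤ → ZMod 3)
    (hw : w ∈ Set.Icc 1 n)
    (hra : ∀ x, x ∈ Set.Icc 1 n → a * w ≤ a * x)
    (hrb : ∀ y, y ∈ Set.Icc 1 n → b * w ≤ b * y) :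
    ∃ x y z : ℤ, x ∈ Set.Icc 1 n ∧ y ∈ Set.Icc 1 n ∧ z ∈ Set.Icc 1 n ∧
      a * x + b * y + c * z + d < 0 ∧ χ x + χ y + χ z = 0 := by
  classical
  obtain ⟨hpos, h2⟩ := hn
  obtain ⟨x, y, z, hx, hy, hz, hlt, e1, e2⟩ :=
    h2 (fun t => if χ t = χ w then (0 : Fin 2) else 1)
  by_cases hxw : χ x = χ w
  · have hyw : χ y = χ w := by
      by_contra hyw
      rw [if_pos hxw, if_neg hyw] at e1
      exact absurd e1 (by decide)
    have hzw : χ z = χ w := by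
      by_contra hzw
      rw [if_pos hyw, if_neg hzw] at e2
      exact absurd e2 (by decide)
    exact ⟨x, y, z, hx, hy, hz, hlt, by rw [hxw, hyw, hzw]; exact zmod3_same _⟩
  · have hyw : ¬ χ y = χ w := by
      intro hyw
      rw [if_neg hxw, if_pos hyw] at e1
      exact absurd e1 (by decide)
    have hzw : ¬ χ z = χ w := by
      intro hzw
      rw [if_neg hyw, if_pos hzw] at e2
      exact absurd e2 (by decide)
    by_cases hyz : χ y = χ z
    · by_cases hxy : χ x = χ y
      · exact ⟨x, y, z, hx, hy, hz, hlt, by rw [hxy, hyz]; exact zmod3_same _⟩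
      · refine ⟨x, w, z, hx, hw, hz, by have := hrb y hy; linarith, ?_⟩
        exact zmod3_distinct _ _ _ hxw (fun h => hxy (h.trans hyz.symm))
          (fun h => hzw h.symm)
    · refine ⟨w, y, z, hw, hy, hz, by have := hra x hx; linarith, ?_⟩
      exact zmod3_distinct _ _ _ (fun h => hyw h.symm) (fun h => hzw h.symm) hyz

lemma core_xz (a b c d n w : ℤ) (hn : TwoGood a b c d n) (χ : ℤ → ZMod 3)
    (hw : w ∈ Set.Icc 1 n)
    (hra : ∀ x, x ∈ Set.Icc 1 n → a * w ≤ a * x)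
    (hrc : ∀ z, z ∈ Set.Icc 1 n → c * w ≤ c * z) :
    ∃ x y z : ℤ, x ∈ Set.Icc 1 n ∧ y ∈ Set.Icc 1 n ∧ z ∈ Set.Icc 1 n ∧
      a * x + b * y + c * z + d < 0 ∧ χ x + χ y + χ z = 0 := by
  obtain ⟨x, y, z, hx, hy, hz, hlt, hsum⟩ :=
    core_xy a c b d n w (twoGood_swap23 hn) χ hw hra hrc
  exact ⟨x, z, y, hx, hz, hy, by linarith, by linear_combination hsum⟩

lemma core_yz (a b c d n w : ℤ) (hn : TwoGood a b c d n) (χ : ℤ → ZMod 3)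
    (hw : w ∈ Set.Icc 1 n)
    (hrb : ∀ y, y ∈ Set.Icc 1 n → b * w ≤ b * y)
    (hrc : ∀ z, z ∈ Set.Icc 1 n → c * w ≤ c * z) :
    ∃ x y z : ℤ, x ∈ Set.Icc 1 n ∧ y ∈ Set.Icc 1 n ∧ z ∈ Set.Icc 1 n ∧
      a * x + b * y + c * z + d < 0 ∧ χ x + χ y + χ z = 0 := by
  obtain ⟨x, y, z, hx, hy, hz, hlt, hsum⟩ :=
    core_xy b c a d n w (twoGood_swap23 (twoGood_swap12 hn)) χ hw hrb hrc
  exact ⟨z, x, y, hz, hx, hy, by linarith, by linear_combination hsum⟩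

lemma toZGood {a b c d n : ℤ} (ha : a ≠ 0) (hb : b ≠ 0) (hc : c ≠ 0)
    (hn : TwoGood a b c d n) : ZGood a b c d n := by
  have hpos := hn.1
  have h1n : (1 : ℤ) ∈ Set.Icc 1 n := ⟨le_refl _, hpos⟩
  have hnn : n ∈ Set.Icc 1 n := ⟨hpos, le_refl _⟩
  refine ⟨hpos, fun χ => ?_⟩
  have repP : ∀ e : ℤ, 0 < e → ∀ x, x ∈ Set.Icc 1 n → e * 1 ≤ e * x :=
    fun e he x hx => mul_le_mul_of_nonneg_left hx.1 he.le
  have repN : ∀ e : ℤ, e < 0 → ∀ x, x ∈ Set.Icc 1 n → e * n ≤ e * x :=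
    fun e he x hx => mul_le_mul_of_nonpos_left hx.2 he.le
  rcases ha.lt_or_gt with ha | ha <;> rcases hb.lt_or_gt with hb | hb <;>
    rcases hc.lt_or_gt with hc | hc
  · exact core_xy a b c d n n hn χ hnn (repN a ha) (repN b hb)
  · exact core_xy a b c d n n hn χ hnn (repN a ha) (repN b hb)
  · exact core_xz a b c d n n hn χ hnn (repN a ha) (repN c hc)
  · exact core_yz a b c d n 1 hn χ h1n (repP b hb) (repP c hc)
  · exact core_yz a b c d n n hn χ hnn (repN b hb) (repN c hc)
  · exact core_xz a b c d n 1 hn χ h1n (repP a ha) (repP c hc)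
  · exact core_xy a b c d n 1 hn χ h1n (repP a ha) (repP b hb)
  · exact core_xy a b c d n 1 hn χ h1n (repP a ha) (repP b hb)

lemma fromZGood {a b c d n : ℤ} (hn : ZGood a b c d n) : TwoGood a b c d n := by
  refine ⟨hn.1, fun χ => ?_⟩
  obtain ⟨x, y, z, hx, hy, hz, hlt, hsum⟩ := hn.2 (fun t => ((χ t : ℕ) : ZMod 3))
  obtain ⟨e1, e2⟩ := fin2_sum _ _ _ hsum
  exact ⟨x, y, z, hx, hy, hz, hlt, e1, e2⟩

lemma exists_twoGood_ppn (a b c d : ℤ) (ha : 0 < a) (hb : 0 < b) (hc : c < 0) :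
    ∃ n, TwoGood a b c d n := by
  classical
  set N1 : ℤ := a + b + |d| + 1 with hN1
  set N2 : ℤ := (a + b) * N1 + |d| + 1 with hN2
  have hd : d ≤ |d| := le_abs_self d
  have hd0 : 0 ≤ |d| := abs_nonneg d
  have h1 : 1 ≤ N1 := by linarith
  have h12 : N1 + 1 ≤ N2 := by nlinarith
  have key : ∀ t T : ℤ, 1 ≤ t → (a + b) * t + |d| + 1 ≤ T →
      a * t + b * t + c * T + d < 0 := by
    intro t T ht hT
    have hT0 : (0 : ℤ) ≤ T := by nlinarith
    have hcc : (c + 1) * T ≤ 0 := mul_nonpos_of_nonpos_of_nonneg (by linarith) hT0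
    nlinarith
  refine ⟨N2, by linarith, fun ψ => ?_⟩
  have m1 : (1 : ℤ) ∈ Set.Icc 1 N2 := ⟨le_refl _, by linarith⟩
  have mN1 : N1 ∈ Set.Icc 1 N2 := ⟨h1, by linarith⟩
  have mN2 : N2 ∈ Set.Icc 1 N2 := ⟨by linarith, le_refl _⟩
  by_cases e1 : ψ 1 = ψ N1
  · exact ⟨1, 1, N1, m1, m1, mN1, key 1 N1 le_rfl (by nlinarith), rfl, e1⟩
  · by_cases e2 : ψ 1 = ψ N2
    · exact ⟨1, 1, N2, m1, m1, mN2, key 1 N2 le_rfl (by nlinarith), rfl, e2⟩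
    · exact ⟨N1, N1, N2, mN1, mN1, mN2, key N1 N2 h1 (by linarith), rfl,
        fin2_resolve _ _ _ e1 e2⟩

lemma exists_twoGood_pnn (a b c d : ℤ) (ha : 0 < a) (hb : b < 0) (hc : c < 0) :
    ∃ n, TwoGood a b c d n := by
  classical
  set N1 : ℤ := a + |d| + 1 with hN1
  set N2 : ℤ := a * N1 + |d| + 1 with hN2
  have hd : d ≤ |d| := le_abs_self d
  have hd0 : 0 ≤ |d| := abs_nonneg d
  have h1 : 1 ≤ N1 := by linarith
  have h12 : N1 + 1 ≤ N2 := by nlinarith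
  have key : ∀ t T : ℤ, 1 ≤ t → a * t + |d| + 1 ≤ T →
      a * t + b * T + c * T + d < 0 := by
    intro t T ht hT
    have hT0 : (0 : ℤ) ≤ T := by nlinarith
    have hcc : (b + c + 1) * T ≤ 0 := mul_nonpos_of_nonpos_of_nonneg (by linarith) hT0
    nlinarith
  refine ⟨N2, by linarith, fun ψ => ?_⟩
  have m1 : (1 : ℤ) ∈ Set.Icc 1 N2 := ⟨le_refl _, by linarith⟩
  have mN1 : N1 ∈ Set.Icc 1 N2 := ⟨h1, by linarith⟩
  have mN2 : N2 ∈ Set.Icc 1 N2 := ⟨by linarith, le_refl _⟩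
  by_cases e1 : ψ 1 = ψ N1
  · exact ⟨1, N1, N1, m1, mN1, mN1, key 1 N1 le_rfl (by nlinarith), e1, rfl⟩
  · by_cases e2 : ψ 1 = ψ N2
    · exact ⟨1, N2, N2, m1, mN2, mN2, key 1 N2 le_rfl (by nlinarith), e2, rfl⟩
    · exact ⟨N1, N2, N2, mN1, mN2, mN2, key N1 N2 h1 (by linarith),
        fin2_resolve _ _ _ e1 e2, rfl⟩

lemma exists_twoGood_nnn (a b c d : ℤ) (ha : a < 0) (hb : b < 0) (hc : c < 0) :
    ∃ n, TwoGood a b c d n := by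
  have hd : d ≤ |d| := le_abs_self d
  have hd0 : 0 ≤ |d| := abs_nonneg d
  refine ⟨|d| + 1, by linarith, fun ψ => ?_⟩
  have hm : |d| + 1 ∈ Set.Icc 1 (|d| + 1) := ⟨by linarith, le_rfl⟩
  refine ⟨_, _, _, hm, hm, hm, ?_, rfl, rfl⟩
  have h1 : (a + 1) * (|d| + 1) ≤ 0 :=
    mul_nonpos_of_nonpos_of_nonneg (by linarith) (by linarith)
  have h2 : (b + 1) * (|d| + 1) ≤ 0 :=
    mul_nonpos_of_nonpos_of_nonneg (by linarith) (by linarith)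
  have h3 : (c + 1) * (|d| + 1) ≤ 0 :=
    mul_nonpos_of_nonpos_of_nonneg (by linarith) (by linarith)
  nlinarith

lemma exists_twoGood_ppp (a b c d : ℤ) (ha : 0 < a) (hb : 0 < b) (hc : 0 < c)
    (hsol : ∃ x y z : ℤ, 0 < x ∧ 0 < y ∧ 0 < z ∧ a * x + b * y + c * z + d < 0) :
    ∃ n, TwoGood a b c d n := by
  obtain ⟨x, y, z, hx, hy, hz, hs⟩ := hsol
  refine ⟨1, one_pos, fun ψ => ⟨1, 1, 1, ⟨le_rfl, le_rfl⟩, ⟨le_rfl, le_rfl⟩,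
    ⟨le_rfl, le_rfl⟩, ?_, rfl, rfl⟩⟩
  nlinarith [mul_nonneg ha.le (by linarith : (0:ℤ) ≤ x - 1),
    mul_nonneg hb.le (by linarith : (0:ℤ) ≤ y - 1),
    mul_nonneg hc.le (by linarith : (0:ℤ) ≤ z - 1)]

lemma exists_twoGood (a b c d : ℤ) (ha : a ≠ 0) (hb : b ≠ 0) (hc : c ≠ 0)
    (hsol : ∃ x y z : ℤ, 0 < x ∧ 0 < y ∧ 0 < z ∧ a * x + b * y + c * z + d < 0) :
    ∃ n, TwoGood a b c d n := by
  rcases ha.lt_or_gt with ha | ha <;> rcases hb.lt_or_gt with hb | hb <;>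
    rcases hc.lt_or_gt with hc | hc
  · exact exists_twoGood_nnn a b c d ha hb hc
  · exact (exists_twoGood_pnn c b a d hc hb ha).imp fun n h => twoGood_swap13 h
  · exact (exists_twoGood_pnn b a c d hb ha hc).imp fun n h => twoGood_swap12 h
  · exact (exists_twoGood_ppn b c a d hb hc ha).imp fun n h =>
      twoGood_swap23 (twoGood_swap13 h)
  · exact exists_twoGood_pnn a b c d ha hb hc
  · exact (exists_twoGood_ppn a c b d ha hc hb).imp fun n h => twoGood_swap23 h
  · exact exists_twoGood_ppn a b c d ha hb hc
  · exact exists_twoGood_ppp a b c d ha hb hc hsol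

/-- Corollary cor:L3: if `a*b*c ≠ 0` and ℒ₃ has a solution in the positive
integers, then `R(ℒ₃,2)` and `R(ℒ₃,ℤ/3ℤ)` exist and are equal, i.e. ℒ₃ admits
an EGZ-generalization. -/
theorem L3_EGZ (a b c d : ℤ) (habc : a * b * c ≠ 0)
    (hsol : ∃ x y z : ℤ, 0 < x ∧ 0 < y ∧ 0 < z ∧ a * x + b * y + c * z + d < 0) :
    (∃ n : ℤ, TwoGood a b c d n) ∧ (∃ n : ℤ, ZGood a b c d n) ∧
    ∃ n : ℤ, IsLeast {m : ℤ | TwoGood a b c d m} n ∧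
      IsLeast {m : ℤ | ZGood a b c d m} n := by
  classical
  have hc : c ≠ 0 := right_ne_zero_of_mul habc
  have hab : a * b ≠ 0 := left_ne_zero_of_mul habc
  have ha : a ≠ 0 := left_ne_zero_of_mul hab
  have hb : b ≠ 0 := right_ne_zero_of_mul hab
  have hTG : ∃ n, TwoGood a b c d n := exists_twoGood a b c d ha hb hc hsol
  have hequiv : ∀ n, TwoGood a b c d n ↔ ZGood a b c d n :=
    fun n => ⟨toZGood ha hb hc, fromZGood⟩
  obtain ⟨lb, hlb, hmin⟩ := Int.exists_least_of_bdd
    (P := fun m => TwoGood a b c d m) ⟨1, fun z hz => hz.1⟩ hTG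
  refine ⟨hTG, hTG.imp fun n h => (hequiv n).mp h, lb, ⟨hlb, hmin⟩,
    ⟨(hequiv lb).mp hlb, fun z hz => hmin z ((hequiv z).mpr hz)⟩⟩
end

section
/- Let a,b,c,d be integers with a,b,c odd and d even. Suppose there exists a positive integer that is 2-good for the equation ax+by+cz = d/2, and there exists a positive integer that is (ℤ/3ℤ)-good for the equation ax+by+cz = d. Then 2·R(ax+by+cz = d/2, 2) ≤ R(ax+by+cz = d, ℤ/3ℤ). -/
/-- `n` is 2-good for the equation `a*x + b*y + c*z = e`: `n` is a positive
integer and every 2-coloring of `{1,…,n}` admits a monochromatic solution of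
the equation with entries in `{1,…,n}`. -/
def TwoGoodEq (a b c e n : ℤ) : Prop :=
  0 < n ∧ ∀ χ : ℤ → Fin 2, ∃ x y z : ℤ,
    x ∈ Set.Icc 1 n ∧ y ∈ Set.Icc 1 n ∧ z ∈ Set.Icc 1 n ∧
    a * x + b * y + c * z = e ∧ χ x = χ y ∧ χ y = χ z

/-- `n` is (ℤ/3ℤ)-good for the equation `a*x + b*y + c*z = e`: `n` is a positive
integer and every (ℤ/3ℤ)-coloring of `{1,…,n}` admits a zero-sum solution of
the equation with entries in `{1,…,n}`. -/
def ZGoodEq (a b c e n : ℤ) : Prop :=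
  0 < n ∧ ∀ χ : ℤ → ZMod 3, ∃ x y z : ℤ,
    x ∈ Set.Icc 1 n ∧ y ∈ Set.Icc 1 n ∧ z ∈ Set.Icc 1 n ∧
    a * x + b * y + c * z = e ∧ χ x + χ y + χ z = 0

lemma fin2_cases (v : Fin 2) : v = 0 ∨ v = 1 := by omega

lemma zgood_to_twogood (a b c d e : ℤ) (ha : Odd a) (hb : Odd b) (hc : Odd c)
    (hd : d = 2 * e) (n : ℤ) (hn : ZGoodEq a b c d n) :
    TwoGoodEq a b c e (n / 2) := by
  have key : ∀ χ : ℤ → Fin 2, ∃ x y z : ℤ,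
      x ∈ Set.Icc 1 (n / 2) ∧ y ∈ Set.Icc 1 (n / 2) ∧ z ∈ Set.Icc 1 (n / 2) ∧
      a * x + b * y + c * z = e ∧ χ x = χ y ∧ χ y = χ z := by
    intro χ
    set ψ : ℤ → ZMod 3 := fun t =>
      if t % 2 = 0 then (if χ (t / 2) = 0 then 0 else 2) else 1 with hψ
    obtain ⟨x, y, z, hx, hy, hz, heq, hsum⟩ := hn.2 ψ
    rw [Set.mem_Icc] at hx hy hz
    have hde : a * x + b * y + c * z = 2 * e := by rw [heq, hd]
    have hEven : ¬ Odd (a * x + b * y + c * z) := by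
      rw [hde]; exact Int.not_odd_iff_even.mpr ⟨e, by ring⟩
    simp only [hψ] at hsum
    rcases Int.even_or_odd x with hx2 | hx2 <;>
      rcases Int.even_or_odd y with hy2 | hy2 <;>
      rcases Int.even_or_odd z with hz2 | hz2
    -- case E E E : the main case
    · rw [if_pos (Int.even_iff.mp hx2), if_pos (Int.even_iff.mp hy2),
        if_pos (Int.even_iff.mp hz2)] at hsum
      have hall : χ (x / 2) = χ (y / 2) ∧ χ (y / 2) = χ (z / 2) := by
        rcases fin2_cases (χ (x / 2)) with h1 | h1 <;>
          rcases fin2_cases (χ (y / 2)) with h2 | h2 <;>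
          rcases fin2_cases (χ (z / 2)) with h3 | h3 <;>
          rw [h1, h2, h3] at hsum <;>
          first
            | exact ⟨h1.trans h2.symm, h2.trans h3.symm⟩
            | exact absurd hsum (by decide)
      have hx0 : x % 2 = 0 := Int.even_iff.mp hx2
      have hy0 : y % 2 = 0 := Int.even_iff.mp hy2
      have hz0 : z % 2 = 0 := Int.even_iff.mp hz2
      refine ⟨x / 2, y / 2, z / 2, ?_, ?_, ?_, ?_, hall.1, hall.2⟩
      · rw [Set.mem_Icc]; omega
      · rw [Set.mem_Icc]; omega
      · rw [Set.mem_Icc]; omega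
      · have h2eq : (2 : ℤ) * (a * (x / 2) + b * (y / 2) + c * (z / 2)) = 2 * e := by
          have ex : 2 * (x / 2) = x := by omega
          have ey : 2 * (y / 2) = y := by omega
          have ez : 2 * (z / 2) = z := by omega
          calc (2 : ℤ) * (a * (x / 2) + b * (y / 2) + c * (z / 2))
              = a * (2 * (x / 2)) + b * (2 * (y / 2)) + c * (2 * (z / 2)) := by ring
            _ = a * x + b * y + c * z := by rw [ex, ey, ez]
            _ = 2 * e := hde
        exact mul_left_cancel₀ two_ne_zero h2eq
    -- case E E O : one odd, parity contradiction
    · exact absurd (((hx2.mul_left a).add (hy2.mul_left b)).add_odd (hc.mul hz2)) hEven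
    -- case E O E
    · exact absurd (((hx2.mul_left a).add_odd (hb.mul hy2)).add_even (hz2.mul_left c)) hEven
    -- case E O O : two odds, contradiction from zero-sum
    · have hy1 : ¬ (y % 2 = 0) := by have := Int.odd_iff.mp hy2; omega
      have hz1 : ¬ (z % 2 = 0) := by have := Int.odd_iff.mp hz2; omega
      rw [if_pos (Int.even_iff.mp hx2), if_neg hy1, if_neg hz1] at hsum
      rcases fin2_cases (χ (x / 2)) with h1 | h1 <;> rw [h1] at hsum <;>
        exact absurd hsum (by decide)
    -- case O E E
    · exact absurd (((ha.mul hx2).add_even (hy2.mul_left b)).add_even (hz2.mul_left c)) hEven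
    -- case O E O
    · have hx1 : ¬ (x % 2 = 0) := by have := Int.odd_iff.mp hx2; omega
      have hz1 : ¬ (z % 2 = 0) := by have := Int.odd_iff.mp hz2; omega
      rw [if_neg hx1, if_pos (Int.even_iff.mp hy2), if_neg hz1] at hsum
      rcases fin2_cases (χ (y / 2)) with h1 | h1 <;> rw [h1] at hsum <;>
        exact absurd hsum (by decide)
    -- case O O E
    · have hx1 : ¬ (x % 2 = 0) := by have := Int.odd_iff.mp hx2; omega
      have hy1 : ¬ (y % 2 = 0) := by have := Int.odd_iff.mp hy2; omega
      rw [if_neg hx1, if_neg hy1, if_pos (Int.even_iff.mp hz2)] at hsum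
      rcases fin2_cases (χ (z / 2)) with h1 | h1 <;> rw [h1] at hsum <;>
        exact absurd hsum (by decide)
    -- case O O O : three odds, parity contradiction
    · exact absurd (((ha.mul hx2).add_odd (hb.mul hy2)).add_odd (hc.mul hz2)) hEven
  have hpos : 0 < n / 2 := by
    obtain ⟨x, y, z, hx, _⟩ := key (fun _ => 0)
    rw [Set.mem_Icc] at hx; omega
  exact ⟨hpos, key⟩

/-- Theorem thm:d: for `a, b, c` odd and `d = 2e` even, if
`R(ax+by+cz = d/2, 2)` and `R(ax+by+cz = d, ℤ/3ℤ)` exist then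
`2·R(ax+by+cz = d/2, 2) ≤ R(ax+by+cz = d, ℤ/3ℤ)`. -/
theorem thm_d (a b c d e : ℤ) (ha : Odd a) (hb : Odd b) (hc : Odd c)
    (hd : d = 2 * e)
    (h2 : ∃ n : ℤ, TwoGoodEq a b c e n)
    (h3 : ∃ n : ℤ, ZGoodEq a b c d n) :
    ∃ r₂ r₃ : ℤ, IsLeast {n : ℤ | TwoGoodEq a b c e n} r₂ ∧
      IsLeast {n : ℤ | ZGoodEq a b c d n} r₃ ∧ 2 * r₂ ≤ r₃ := by
  classical
  obtain ⟨r₂, hr₂, hr₂min⟩ :=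
    Int.exists_least_of_bdd (P := fun n => TwoGoodEq a b c e n)
      ⟨1, fun z hz => hz.1⟩ h2
  obtain ⟨r₃, hr₃, hr₃min⟩ :=
    Int.exists_least_of_bdd (P := fun n => ZGoodEq a b c d n)
      ⟨1, fun z hz => hz.1⟩ h3
  refine ⟨r₂, r₃, ⟨hr₂, hr₂min⟩, ⟨hr₃, hr₃min⟩, ?_⟩
  have h := hr₂min _ (zgood_to_twogood a b c d e ha hb hc hd r₃ hr₃)
  omega
end

section
/- Let a,b,c be odd integers, and suppose there exists a positive integer that is (ℤ/3ℤ)-good for the equation ax+by+cz = 0. Then there exists a positive integer that is 2-good for ax+by+cz = 0, and 2·R(ax+by+cz = 0, 2) ≤ R(ax+by+cz = 0, ℤ/3ℤ); in particular R(ax+by+cz = 0, 2) ≠ R(ax+by+cz = 0, ℤ/3ℤ), so the equation admits no Erdős–Ginzburg–Ziv generalization. -/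
lemma iota_mono : ∀ i j k : Fin 2,
    ((i.val : ZMod 3)) + (j.val : ZMod 3) + (k.val : ZMod 3) = 0 → i = j ∧ j = k := by
  decide

lemma half_good (a b c : ℤ) (ha : Odd a) (hb : Odd b) (hc : Odd c) {n : ℤ}
    (hn : ZGoodEq a b c 0 n) : TwoGoodEq a b c 0 (n / 2) := by
  obtain ⟨hpos, hcol⟩ := hn
  obtain ⟨p, hp⟩ := ha
  obtain ⟨q, hq⟩ := hb
  obtain ⟨r, hr⟩ := hc
  -- n ≥ 2, since n = 1 would force a + b + c = 0, impossible for odd a,b,c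
  have hn2 : 2 ≤ n := by
    by_contra h
    have hn1 : n = 1 := by omega
    obtain ⟨x, y, z, hx, hy, hz, heq, -⟩ := hcol (fun _ => 0)
    rw [hn1, Set.mem_Icc] at hx hy hz
    have hx1 : x = 1 := le_antisymm hx.2 hx.1
    have hy1 : y = 1 := le_antisymm hy.2 hy.1
    have hz1 : z = 1 := le_antisymm hz.2 hz.1
    subst hx1 hy1 hz1
    omega
  refine ⟨by omega, fun χ => ?_⟩
  obtain ⟨x, y, z, hx, hy, hz, heq, hsum⟩ :=
    hcol (fun t => if t % 2 = 0 then ((χ (t / 2)).val : ZMod 3) else 2)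
  rw [Set.mem_Icc] at hx hy hz
  -- parity: x + y + z is even
  have hev : x + y + z = 2 * (-(p * x + q * y + r * z)) := by
    linear_combination heq - x * hp - y * hq - z * hr
  have hpar : x % 2 + y % 2 + z % 2 = 0 ∨ x % 2 + y % 2 + z % 2 = 2 := by omega
  rcases Int.emod_two_eq x with hx2 | hx2 <;>
    rcases Int.emod_two_eq y with hy2 | hy2 <;>
      rcases Int.emod_two_eq z with hz2 | hz2 <;>
        simp only [hx2, hy2, hz2] at hsum hpar <;>
          norm_num at hsum
  · -- all even: the good case
    have hx2 : 2 * (x / 2) = x := by omega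
    have hy2 : 2 * (y / 2) = y := by omega
    have hz2 : 2 * (z / 2) = z := by omega
    obtain ⟨hij, hjk⟩ := iota_mono _ _ _ hsum
    refine ⟨x / 2, y / 2, z / 2, ?_, ?_, ?_, ?_, hij, hjk⟩
    · rw [Set.mem_Icc]; omega
    · rw [Set.mem_Icc]; omega
    · rw [Set.mem_Icc]; omega
    · have h2 : 2 * (a * (x / 2) + b * (y / 2) + c * (z / 2)) = 0 := by
        linear_combination heq + a * hx2 + b * hy2 + c * hz2
      linarith
  · -- x, y even, z odd: parity contradiction
    omega
  · omega
  · -- x even, y odd, z odd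
    exfalso; revert hsum
    generalize χ (x / 2) = i
    revert i; decide
  · omega
  · exfalso; revert hsum
    generalize χ (y / 2) = i
    revert i; decide
  · exfalso; revert hsum
    generalize χ (z / 2) = i
    revert i; decide
  · omega

/-- Corollary cor:odds: for `a, b, c` odd, if `R(ax+by+cz = 0, ℤ/3ℤ)` exists
then `R(ax+by+cz = 0, 2)` exists, `2·R(ax+by+cz = 0, 2) ≤ R(ax+by+cz = 0, ℤ/3ℤ)`
and in particular the two Rado numbers differ, so the equation admits no
EGZ-generalization. -/
theorem cor_odds (a b c : ℤ) (ha : Odd a) (hb : Odd b) (hc : Odd c)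
    (h3 : ∃ n : ℤ, ZGoodEq a b c 0 n) :
    (∃ n : ℤ, TwoGoodEq a b c 0 n) ∧
    ∃ r₂ r₃ : ℤ, IsLeast {n : ℤ | TwoGoodEq a b c 0 n} r₂ ∧
      IsLeast {n : ℤ | ZGoodEq a b c 0 n} r₃ ∧ 2 * r₂ ≤ r₃ ∧ r₂ ≠ r₃ := by
  obtain ⟨n, hn⟩ := h3
  have h2g : TwoGoodEq a b c 0 (n / 2) := half_good a b c ha hb hc hn
  refine ⟨⟨n / 2, h2g⟩, ?_⟩
  obtain ⟨r₂, hr₂, hr₂min⟩ := Int.exists_least_of_bdd (P := fun m => TwoGoodEq a b c 0 m)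
    ⟨1, fun z hz => hz.1⟩ ⟨n / 2, h2g⟩
  obtain ⟨r₃, hr₃, hr₃min⟩ := Int.exists_least_of_bdd (P := fun m => ZGoodEq a b c 0 m)
    ⟨1, fun z hz => hz.1⟩ ⟨n, hn⟩
  have hle : r₂ ≤ r₃ / 2 := hr₂min _ (half_good a b c ha hb hc hr₃)
  have h1 : 0 < r₂ := hr₂.1
  have h2 : 0 < r₃ := hr₃.1
  exact ⟨r₂, r₃, ⟨hr₂, hr₂min⟩, ⟨hr₃, hr₃min⟩, by omega, by omega⟩
end

section
/- Let d be a negative even integer, and suppose there exists a positive integer that is (ℤ/3ℤ)-good for the equation x+y-z = d. Then R(x+y-z = d, ℤ/3ℤ) ≥ 2(5-2d) > 5-4d = R(x+y-z = d, 2); in particular R(x+y-z = d, ℤ/3ℤ) > R(x+y-z = d, 2), so the equation x+y-z = d admits no Erdős–Ginzburg–Ziv generalization. -/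
private lemma fin2_aux : ∀ a b x : Fin 2, a ≠ b → x ≠ a → x = b := by decide

/-- `5 - 4d` is 2-good. -/
private lemma two_ub (d : ℤ) (hd : d < 0) : TwoGoodEq 1 1 (-1) d (5 - 4 * d) := by
  refine ⟨by omega, fun χ => ?_⟩
  by_cases h1 : χ (2 - d) = χ 1
  · exact ⟨1, 1, 2 - d, Set.mem_Icc.mpr ⟨by omega, by omega⟩,
      Set.mem_Icc.mpr ⟨by omega, by omega⟩, Set.mem_Icc.mpr ⟨by omega, by omega⟩,
      by ring, rfl, h1.symm⟩
  · by_cases h2 : χ (4 - 3 * d) = χ (2 - d)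
    · exact ⟨2 - d, 2 - d, 4 - 3 * d, Set.mem_Icc.mpr ⟨by omega, by omega⟩,
        Set.mem_Icc.mpr ⟨by omega, by omega⟩, Set.mem_Icc.mpr ⟨by omega, by omega⟩,
        by ring, rfl, h2.symm⟩
    · have h2' : χ (4 - 3 * d) = χ 1 := fin2_aux _ _ _ h1 h2
      by_cases h3 : χ (5 - 4 * d) = χ 1
      · exact ⟨1, 4 - 3 * d, 5 - 4 * d, Set.mem_Icc.mpr ⟨by omega, by omega⟩,
          Set.mem_Icc.mpr ⟨by omega, by omega⟩, Set.mem_Icc.mpr ⟨by omega, by omega⟩,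
          by ring, h2'.symm, h2'.trans h3.symm⟩
      · have h3' : χ (5 - 4 * d) = χ (2 - d) :=
          fin2_aux _ _ _ (fun h => h1 h.symm) h3
        by_cases h4 : χ (3 - 2 * d) = χ 1
        · exact ⟨1, 3 - 2 * d, 4 - 3 * d, Set.mem_Icc.mpr ⟨by omega, by omega⟩,
            Set.mem_Icc.mpr ⟨by omega, by omega⟩, Set.mem_Icc.mpr ⟨by omega, by omega⟩,
            by ring, h4.symm, h4.trans h2'.symm⟩
        · have h4' : χ (3 - 2 * d) = χ (2 - d) :=
            fin2_aux _ _ _ (fun h => h1 h.symm) h4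
          exact ⟨2 - d, 3 - 2 * d, 5 - 4 * d, Set.mem_Icc.mpr ⟨by omega, by omega⟩,
            Set.mem_Icc.mpr ⟨by omega, by omega⟩, Set.mem_Icc.mpr ⟨by omega, by omega⟩,
            by ring, h4'.symm, h4'.trans h3'.symm⟩

/-- Any 2-good `n` is at least `5 - 4d`. -/
private lemma two_lb (d : ℤ) (hd : d < 0) (n : ℤ)
    (h : TwoGoodEq 1 1 (-1) d n) : 5 - 4 * d ≤ n := by
  obtain ⟨hn, hχ⟩ := h
  by_contra hlt
  push_neg at hlt
  obtain ⟨x, y, z, hx, hy, hz, heq, hxy, hyz⟩ :=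
    hχ (fun t => if 2 - d ≤ t ∧ t ≤ 3 - 3 * d then 1 else 0)
  simp only [Set.mem_Icc] at hx hy hz
  split_ifs at hxy hyz <;>
    first
      | exact absurd hxy (by decide)
      | exact absurd hyz (by decide)
      | omega

/-- Any (ℤ/3ℤ)-good `n` is at least `10 - 4d` when `d` is even and negative. -/
private lemma z_lb (d : ℤ) (hd : d < 0) (hde : Even d) (n : ℤ)
    (h : ZGoodEq 1 1 (-1) d n) : 10 - 4 * d ≤ n := by
  obtain ⟨k, hk⟩ := hde
  obtain ⟨hn, hχ⟩ := h
  by_contra hlt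
  push_neg at hlt
  obtain ⟨x, y, z, hx, hy, hz, heq, hsum⟩ :=
    hχ (fun t => if t % 2 = 1 then 2 else
      if 4 - d ≤ t ∧ t ≤ 6 - 3 * d then 1 else 0)
  simp only [Set.mem_Icc] at hx hy hz
  split_ifs at hsum <;>
    first
      | exact absurd hsum (by decide)
      | omega

/-- Corollary cor:nh1: for `d` a negative even integer (assuming
`R(x+y-z = d, ℤ/3ℤ)` exists), `R(x+y-z = d, 2) = 5 - 4d` and
`R(x+y-z = d, ℤ/3ℤ) ≥ 2(5-2d) > 5-4d = R(x+y-z = d, 2)`, so the equation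
admits no EGZ-generalization. -/
theorem cor_nh1 (d : ℤ) (hd : d < 0) (hde : Even d)
    (h3 : ∃ n : ℤ, ZGoodEq 1 1 (-1) d n) :
    IsLeast {n : ℤ | TwoGoodEq 1 1 (-1) d n} (5 - 4 * d) ∧
    ∃ r₃ : ℤ, IsLeast {n : ℤ | ZGoodEq 1 1 (-1) d n} r₃ ∧
      2 * (5 - 2 * d) ≤ r₃ ∧ 5 - 4 * d < r₃ := by
  constructor
  · exact ⟨two_ub d hd, fun n hn => two_lb d hd n hn⟩
  · haveI : DecidablePred (fun n : ℤ => ZGoodEq 1 1 (-1) d n) :=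
      fun _ => Classical.dec _
    obtain ⟨r₃, hr₃, hleast⟩ :=
      Int.exists_least_of_bdd (P := fun n : ℤ => ZGoodEq 1 1 (-1) d n)
        ⟨1, fun z hz => hz.1⟩ h3
    have h10 : 10 - 4 * d ≤ r₃ := z_lb d hd hde r₃ hr₃
    exact ⟨r₃, ⟨hr₃, fun n hn => hleast n hn⟩, by omega, by omega⟩
end

section
/- Let d be a positive integer congruent to 6, 8, or 0 modulo 10, and suppose there exists a positive integer that is (ℤ/3ℤ)-good for the equation x+y-z = d. Then R(x+y-z = d, ℤ/3ℤ) ≥ 2(d/2 - ⌈(d/2)/5⌉ + 1) > d - ⌈d/5⌉ + 1 = R(x+y-z = d, 2); in particular R(x+y-z = d, ℤ/3ℤ) > R(x+y-z = d, 2), so the equation x+y-z = d admits no Erdős–Ginzburg–Ziv generalization. -/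
private lemma fin2_eq {a b c : Fin 2} (h1 : a ≠ c) (h2 : b ≠ c) : a = b := by
  revert h1 h2; revert a b c; decide

private lemma ceil5 (d c : ℤ) (h1 : 5*c - 5 < d) (h2 : d ≤ 5*c) : ⌈(d : ℚ) / 5⌉ = c := by
  rw [Int.ceil_eq_iff]
  constructor
  · rw [lt_div_iff₀ (by norm_num : (0:ℚ) < 5)]
    push_cast
    rw [show ((c:ℚ) - 1) * 5 = 5*c - 5 by ring]
    exact_mod_cast h1
  · rw [div_le_iff₀ (by norm_num : (0:ℚ) < 5)]
    rw [show ((c:ℚ)) * 5 = ((5*c : ℤ) : ℚ) by push_cast; ring]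
    exact_mod_cast h2

/-- 2-coloring of `[1, d-t]` avoiding monochromatic solutions of `x+y-z = d`. -/
private lemma avoid2 (d t : ℤ) (h2t : 2*t ≤ d) (h5t : d ≤ 5*t) :
    ∃ χ : ℤ → Fin 2, ∀ x y z : ℤ, 1 ≤ x → x ≤ d - t → 1 ≤ y → y ≤ d - t →
      1 ≤ z → z ≤ d - t → x + y - z = d → χ x = χ y → χ y = χ z → False := by
  obtain ⟨c, hc1, hc2⟩ : ∃ c : ℤ, d + t + 1 ≤ 2*c ∧ 2*c ≤ d + t + 2 := ⟨(d+t)/2 + 1, by omega, by omega⟩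
  refine ⟨fun i => if i ≤ t ∨ c ≤ i then 0 else 1, ?_⟩
  intro x y z hx1 hx2 hy1 hy2 hz1 hz2 heq h1 h2
  dsimp only at h1 h2
  split_ifs at h1 h2 with p q r
  all_goals first
    | omega
    | (exact absurd h1 (by decide))
    | (exact absurd h1.symm (by decide))
    | (exact absurd h2 (by decide))
    | (exact absurd h2.symm (by decide))

/-- (ℤ/3)-coloring of `[1, 2(e-te)+1]` with no zero-sum solution of `x+y-z = 2e`. -/
private lemma zavoid (e te : ℤ) (h2t : 2*te ≤ e) (h5t : e ≤ 5*te) :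
    ∃ χ : ℤ → ZMod 3, ∀ x y z : ℤ, 1 ≤ x → x ≤ 2*(e - te) + 1 → 1 ≤ y → y ≤ 2*(e - te) + 1 →
      1 ≤ z → z ≤ 2*(e - te) + 1 → x + y - z = 2*e → χ x + χ y + χ z = 0 → False := by
  obtain ⟨c, hc1, hc2⟩ : ∃ c : ℤ, e + te + 1 ≤ 2*c ∧ 2*c ≤ e + te + 2 :=
    ⟨(e+te)/2 + 1, by omega, by omega⟩
  refine ⟨fun i => if i % 2 = 1 then (2 : ZMod 3) else if i/2 ≤ te ∨ c ≤ i/2 then 0 else 1, ?_⟩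
  intro x y z hx1 hx2 hy1 hy2 hz1 hz2 heq hsum
  dsimp only at hsum
  split_ifs at hsum
  all_goals first
    | omega
    | (exact absurd hsum (by decide))

/-- Upper bound: if `d = 5t-4`, or `d ∈ {5t-2, 5t}` with `t` even, `t ≥ 2`, then every
2-coloring of `[1, d-t+1]` has a monochromatic solution of `x+y-z = d`
(stated contrapositively). -/
private lemma upper2 (d t : ℤ) (ht : 2 ≤ t)
    (hco : d = 5*t - 4 ∨ (d = 5*t - 2 ∧ t % 2 = 0) ∨ (d = 5*t ∧ t % 2 = 0))
    (χ : ℤ → Fin 2)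
    (key : ∀ x y z : ℤ, 1 ≤ x → x ≤ d - t + 1 → 1 ≤ y → y ≤ d - t + 1 →
      1 ≤ z → z ≤ d - t + 1 → x + y - z = d → χ x = χ y → χ y = χ z → False) : False := by
  -- R1: going down by t-1 from a point colored like the top
  have R1 : ∀ P : ℤ, t ≤ P → P ≤ d - t + 1 → χ P = χ (d - t + 1) →
      χ (P - t + 1) ≠ χ (d - t + 1) := by
    intro P h1 h2 hP hcon
    exact key P (d - t + 1) (P - t + 1) (by omega) (by omega) (by omega) (by omega)
      (by omega) (by omega) (by omega) hP hcon.symm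
  -- R2: the point u = d - 2t + 2 has the other color
  have R2 : χ (d - 2*t + 2) ≠ χ (d - t + 1) := by
    have h := R1 (d - t + 1) (by omega) (by omega) rfl
    rwa [show d - t + 1 - t + 1 = d - 2*t + 2 by ring] at h
  -- R3
  have R3 : ∀ P : ℤ, 2*t - 1 ≤ P → P ≤ d - t + 1 → χ P ≠ χ (d - t + 1) →
      χ (P - 2*t + 2) = χ (d - t + 1) := by
    intro P h1 h2 hP
    by_contra hcon
    exact key P (d - 2*t + 2) (P - 2*t + 2) (by omega) (by omega) (by omega) (by omega)
      (by omega) (by omega) (by omega) (fin2_eq hP R2) (fin2_eq R2 hcon)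
  -- R4: block [t, 2t-2] has the other color
  have R4 : ∀ Q : ℤ, t ≤ Q → Q ≤ 2*t - 2 → χ Q ≠ χ (d - t + 1) := by
    intro Q h1 h2 hcon
    have h3 : χ (Q + t - 1) ≠ χ (d - t + 1) := by
      intro hP
      have := R1 (Q + t - 1) (by omega) (by omega) hP
      rw [show Q + t - 1 - t + 1 = Q by ring] at this
      exact this hcon
    have h4 : χ (Q - t + 1) ≠ χ (d - t + 1) := by
      intro hz
      exact key Q (d - t + 1) (Q - t + 1) (by omega) (by omega) (by omega) (by omega)
        (by omega) (by omega) (by omega) hcon hz.symm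
    exact key (Q + t - 1) (d - 2*t + 2) (Q - t + 1) (by omega) (by omega) (by omega) (by omega)
      (by omega) (by omega) (by omega) (fin2_eq h3 R2) (fin2_eq R2 h4)
  -- R5: block [3t-2, 4t-4] has the top color
  have R5 : ∀ Q : ℤ, 3*t - 2 ≤ Q → Q ≤ 4*t - 4 → Q ≤ d - t + 1 → χ Q = χ (d - t + 1) := by
    intro Q h1 h2 h3
    by_contra hcon
    exact R4 (Q - 2*t + 2) (by omega) (by omega) (R3 Q (by omega) h3 hcon)
  -- R6: block [2t-1, 3t-5] has the other color
  have R6 : ∀ Q : ℤ, 2*t - 1 ≤ Q → Q ≤ 3*t - 5 → χ Q ≠ χ (d - t + 1) := by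
    intro Q h1 h2
    have h5 := R5 (Q + t - 1) (by omega) (by omega) (by omega)
    have := R1 (Q + t - 1) (by omega) (by omega) h5
    rwa [show Q + t - 1 - t + 1 = Q by ring] at this
  rcases hco with hA | ⟨hB, hB2⟩ | ⟨hC, hC2⟩
  · -- d = 5t - 4 : u = 3t-2 lies in the R5 block
    exact R2 (R5 (d - 2*t + 2) (by omega) (by omega) (by omega))
  · -- d = 5t - 2
    rcases (by omega : t = 2 ∨ 4 ≤ t) with ht2 | ht4
    · -- d = 8 special chain
      subst ht2
      have hd8 : d = 8 := by omega
      subst hd8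
      have e2 : χ 6 ≠ χ 7 := by have := R2; norm_num at this ⊢; exact this
      have e3 : χ 2 ≠ χ 7 := by have := R4 2 (by norm_num) (by norm_num); norm_num at this ⊢; exact this
      have e4 : χ 4 = χ 7 := by
        by_contra h
        have := R3 4 (by norm_num) (by norm_num) (by norm_num; exact h)
        norm_num at this
        exact e3 this
      have e5 : χ 3 ≠ χ 7 := by
        have := R1 4 (by norm_num) (by norm_num) (by norm_num; exact e4)
        norm_num at this; exact this
      have e6 : χ 5 ≠ χ 7 := by
        intro h5
        have h1' : χ 1 ≠ χ 7 := by
          intro hz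
          exact key 4 5 1 (by norm_num) (by norm_num) (by norm_num) (by norm_num)
            (by norm_num) (by norm_num) (by norm_num) (e4.trans h5.symm) (h5.trans hz.symm)
        exact key 3 6 1 (by norm_num) (by norm_num) (by norm_num) (by norm_num)
          (by norm_num) (by norm_num) (by norm_num) (fin2_eq e5 e2) (fin2_eq e2 h1')
      exact key 5 6 3 (by norm_num) (by norm_num) (by norm_num) (by norm_num)
        (by norm_num) (by norm_num) (by norm_num) (fin2_eq e6 e2) (fin2_eq e2 e5)
    · -- general : u = 3t lies in the R5 block
      exact R2 (R5 (d - 2*t + 2) (by omega) (by omega) (by omega))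
  · -- d = 5t
    rcases (by omega : t = 2 ∨ 4 ≤ t) with ht2 | ht4
    · -- d = 10 special chain
      subst ht2
      have hd10 : d = 10 := by omega
      subst hd10
      have e2 : χ 8 ≠ χ 9 := by have := R2; norm_num at this ⊢; exact this
      have e3 : χ 2 ≠ χ 9 := by have := R4 2 (by norm_num) (by norm_num); norm_num at this ⊢; exact this
      have e4 : χ 4 = χ 9 := by
        by_contra h
        have := R3 4 (by norm_num) (by norm_num) (by norm_num; exact h)
        norm_num at this
        exact e3 this
      have e5 : χ 3 ≠ χ 9 := by
        have := R1 4 (by norm_num) (by norm_num) (by norm_num; exact e4)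
        norm_num at this; exact this
      have e6 : χ 6 = χ 9 := by
        by_contra h6
        exact key 8 8 6 (by norm_num) (by norm_num) (by norm_num) (by norm_num)
          (by norm_num) (by norm_num) (by norm_num) rfl (fin2_eq e2 h6)
      have e7 : χ 5 ≠ χ 9 := by
        intro h5
        exact key 6 9 5 (by norm_num) (by norm_num) (by norm_num) (by norm_num)
          (by norm_num) (by norm_num) (by norm_num) e6 h5.symm
      exact key 5 8 3 (by norm_num) (by norm_num) (by norm_num) (by norm_num)
        (by norm_num) (by norm_num) (by norm_num) (fin2_eq e7 e2) (fin2_eq e2 e5)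
    · -- general t ≥ 4
      have f1 : χ (3*t - 2) = χ (d - t + 1) := R5 _ (by omega) (by omega) (by omega)
      have f2 : χ (3*t - 1) = χ (d - t + 1) := R5 _ (by omega) (by omega) (by omega)
      have f3 : χ (t - 3) ≠ χ (d - t + 1) := by
        intro hz
        exact key (3*t - 2) (3*t - 1) (t - 3) (by omega) (by omega) (by omega) (by omega)
          (by omega) (by omega) (by omega) (f1.trans f2.symm) (f2.trans hz.symm)
      have f4 : χ (3*t - 5) ≠ χ (d - t + 1) := R6 _ (by omega) (by omega)
      exact key (3*t - 5) (d - 2*t + 2) (t - 3) (by omega) (by omega) (by omega) (by omega)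
        (by omega) (by omega) (by omega) (fin2_eq f4 R2) (fin2_eq R2 f3)

/-- Corollary cor:nh2: for `d = 2e` a positive integer congruent to 6, 8 or 0
mod 10 (assuming `R(x+y-z = d, ℤ/3ℤ)` exists),
`R(x+y-z = d, 2) = d - ⌈d/5⌉ + 1` and
`R(x+y-z = d, ℤ/3ℤ) ≥ 2(d/2 - ⌈(d/2)/5⌉ + 1) > d - ⌈d/5⌉ + 1 = R(x+y-z = d, 2)`,
so the equation admits no EGZ-generalization. -/
theorem cor_nh2 (d e : ℤ) (hd : 0 < d) (hde : d = 2 * e)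
    (hmod : d % 10 = 6 ∨ d % 10 = 8 ∨ d % 10 = 0)
    (h3 : ∃ n : ℤ, ZGoodEq 1 1 (-1) d n) :
    IsLeast {n : ℤ | TwoGoodEq 1 1 (-1) d n} (d - ⌈(d : ℚ) / 5⌉ + 1) ∧
    ∃ r₃ : ℤ, IsLeast {n : ℤ | ZGoodEq 1 1 (-1) d n} r₃ ∧
      2 * (e - ⌈(e : ℚ) / 5⌉ + 1) ≤ r₃ ∧ d - ⌈(d : ℚ) / 5⌉ + 1 < r₃ := by
  -- extract unified integer parameters
  obtain ⟨t2, te, hcd, hce, hco, ht2, h2te, h5te, htt, h2t2, h5t2⟩ :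
      ∃ t2 te : ℤ, ⌈(d : ℚ) / 5⌉ = t2 ∧ ⌈(e : ℚ) / 5⌉ = te ∧
        (d = 5*t2 - 4 ∨ (d = 5*t2 - 2 ∧ t2 % 2 = 0) ∨ (d = 5*t2 ∧ t2 % 2 = 0)) ∧
        2 ≤ t2 ∧ 2*te ≤ e ∧ e ≤ 5*te ∧ 2*te ≤ t2 ∧ 2*t2 ≤ d ∧ d ≤ 5*t2 := by
    rcases hmod with hm | hm | hm
    · refine ⟨2*(d/10)+2, d/10+1, ceil5 d _ (by omega) (by omega),
        ceil5 e _ (by omega) (by omega), by omega, by omega, by omega, by omega,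
        by omega, by omega, by omega⟩
    · refine ⟨2*(d/10)+2, d/10+1, ceil5 d _ (by omega) (by omega),
        ceil5 e _ (by omega) (by omega), by omega, by omega, by omega, by omega,
        by omega, by omega, by omega⟩
    · refine ⟨2*(d/10), d/10, ceil5 d _ (by omega) (by omega),
        ceil5 e _ (by omega) (by omega), by omega, by omega, by omega, by omega,
        by omega, by omega, by omega⟩
  rw [hcd, hce]
  constructor
  · constructor
    · -- membership: d - t2 + 1 is 2-good
      refine ⟨by omega, ?_⟩
      intro χ
      by_contra hno
      refine upper2 d t2 ht2 hco χ ?_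
      intro x y z hx1 hx2 hy1 hy2 hz1 hz2 heq h1 h2
      exact hno ⟨x, y, z, Set.mem_Icc.mpr ⟨hx1, hx2⟩, Set.mem_Icc.mpr ⟨hy1, hy2⟩,
        Set.mem_Icc.mpr ⟨hz1, hz2⟩, by omega, h1, h2⟩
    · -- lower bound
      intro n hn
      by_contra hlt
      push_neg at hlt
      obtain ⟨hnpos, hall⟩ := hn
      obtain ⟨χ, hχ⟩ := avoid2 d t2 h2t2 h5t2
      obtain ⟨x, y, z, hx, hy, hz, heq, h1, h2⟩ := hall χ
      rw [Set.mem_Icc] at hx hy hz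
      exact hχ x y z hx.1 (by omega) hy.1 (by omega) hz.1 (by omega) (by omega) h1 h2
  · -- part 2 : Z/3
    obtain ⟨r₃, hr₃mem, hr₃min⟩ :=
      Int.exists_least_of_bdd (P := fun n => ZGoodEq 1 1 (-1) d n)
        ⟨1, fun n hn => hn.1⟩ h3
    have hbound : 2 * (e - te + 1) ≤ r₃ := by
      by_contra hlt
      push_neg at hlt
      obtain ⟨hpos, hall⟩ := hr₃mem
      obtain ⟨χ, hχ⟩ := zavoid e te h2te h5te
      obtain ⟨x, y, z, hx, hy, hz, heq, hsum⟩ := hall χ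
      rw [Set.mem_Icc] at hx hy hz
      exact hχ x y z hx.1 (by omega) hy.1 (by omega) hz.1 (by omega) (by omega) hsum
    exact ⟨r₃, ⟨hr₃mem, fun n hn => hr₃min n hn⟩, hbound, by omega⟩
end

section
/- Every coloring χ:{1,…,8}→ℤ/3ℤ admits positive integers x,y,z ∈ {1,…,8} with x + 2y - 4z = 0 and χ(x)+χ(y)+χ(z) = 0 in ℤ/3ℤ. Together with the existence of a (ℤ/3ℤ)-coloring of {1,…,7} without such a zero-sum solution, this gives R(x+2y-4z = 0, ℤ/3ℤ) = 8. -/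
set_option synthInstance.maxSize 1000
set_option synthInstance.maxHeartbeats 1000000
set_option maxHeartbeats 2000000
set_option maxRecDepth 10000

lemma key3 : ∀ a1 a2 a3 a4 a5 a6 a7 a8 : ZMod 3,
      a2 + a1 + a1 = 0 ∨
      a6 + a1 + a2 = 0 ∨
      a4 + a2 + a2 = 0 ∨
      a2 + a3 + a2 = 0 ∨
      a8 + a2 + a3 = 0 ∨
      a6 + a3 + a3 = 0 ∨
      a4 + a4 + a3 = 0 ∨
      a2 + a5 + a3 = 0 ∨
      a8 + a4 + a4 = 0 ∨
      a6 + a5 + a4 = 0 ∨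
      a4 + a6 + a4 = 0 ∨
      a2 + a7 + a4 = 0 ∨
      a8 + a6 + a5 = 0 ∨
      a6 + a7 + a5 = 0 ∨
      a4 + a8 + a5 = 0 ∨
      a8 + a8 + a6 = 0 := by decide

def χbad : ℤ → ZMod 3 := fun t =>
  if t = 1 then 0 else if t = 2 then 1 else if t = 3 then 0 else
  if t = 4 then 2 else if t = 5 then 1 else if t = 6 then 1 else
  if t = 7 then 2 else 0

lemma good8 : ∀ χ : ℤ → ZMod 3, ∃ x y z : ℤ,
    x ∈ Set.Icc (1 : ℤ) 8 ∧ y ∈ Set.Icc (1 : ℤ) 8 ∧ z ∈ Set.Icc (1 : ℤ) 8 ∧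
    x + 2 * y - 4 * z = 0 ∧ χ x + χ y + χ z = 0 := by
  intro χ
  rcases key3 (χ 1) (χ 2) (χ 3) (χ 4) (χ 5) (χ 6) (χ 7) (χ 8) with h|h|h|h|h|h|h|h|h|h|h|h|h|h|h|h
  · exact ⟨2, 1, 1, by norm_num, by norm_num, by norm_num, by norm_num, h⟩
  · exact ⟨6, 1, 2, by norm_num, by norm_num, by norm_num, by norm_num, h⟩
  · exact ⟨4, 2, 2, by norm_num, by norm_num, by norm_num, by norm_num, h⟩
  · exact ⟨2, 3, 2, by norm_num, by norm_num, by norm_num, by norm_num, h⟩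
  · exact ⟨8, 2, 3, by norm_num, by norm_num, by norm_num, by norm_num, h⟩
  · exact ⟨6, 3, 3, by norm_num, by norm_num, by norm_num, by norm_num, h⟩
  · exact ⟨4, 4, 3, by norm_num, by norm_num, by norm_num, by norm_num, h⟩
  · exact ⟨2, 5, 3, by norm_num, by norm_num, by norm_num, by norm_num, h⟩
  · exact ⟨8, 4, 4, by norm_num, by norm_num, by norm_num, by norm_num, h⟩
  · exact ⟨6, 5, 4, by norm_num, by norm_num, by norm_num, by norm_num, h⟩
  · exact ⟨4, 6, 4, by norm_num, by norm_num, by norm_num, by norm_num, h⟩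
  · exact ⟨2, 7, 4, by norm_num, by norm_num, by norm_num, by norm_num, h⟩
  · exact ⟨8, 6, 5, by norm_num, by norm_num, by norm_num, by norm_num, h⟩
  · exact ⟨6, 7, 5, by norm_num, by norm_num, by norm_num, by norm_num, h⟩
  · exact ⟨4, 8, 5, by norm_num, by norm_num, by norm_num, by norm_num, h⟩
  · exact ⟨8, 8, 6, by norm_num, by norm_num, by norm_num, by norm_num, h⟩

/-- Proposition: every (ℤ/3ℤ)-coloring of `{1,…,8}` admits a zero-sum solution
of `x + 2y - 4z = 0`, and `R(x+2y-4z = 0, ℤ/3ℤ) = 8`. -/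
theorem prop_x2y4z :
    (∀ χ : ℤ → ZMod 3, ∃ x y z : ℤ,
      x ∈ Set.Icc (1 : ℤ) 8 ∧ y ∈ Set.Icc (1 : ℤ) 8 ∧ z ∈ Set.Icc (1 : ℤ) 8 ∧
      x + 2 * y - 4 * z = 0 ∧ χ x + χ y + χ z = 0) ∧
    IsLeast {n : ℤ | ZGoodEq 1 2 (-4) 0 n} 8 := by
  refine ⟨good8, ⟨by norm_num, fun χ => ?_⟩, fun n hn => ?_⟩
  · obtain ⟨x, y, z, hx, hy, hz, heq, hs⟩ := good8 χ
    exact ⟨x, y, z, hx, hy, hz, by linarith, hs⟩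
  · by_contra hlt
    push_neg at hlt
    obtain ⟨hpos, h⟩ := hn
    obtain ⟨x, y, z, ⟨hx1, hx2⟩, ⟨hy1, hy2⟩, ⟨hz1, hz2⟩, heq, hsum⟩ := h χbad
    have hx7 : x ≤ 7 := by omega
    have hy7 : y ≤ 7 := by omega
    have hz7 : z ≤ 7 := by omega
    interval_cases x <;> interval_cases y <;> interval_cases z <;>
      first
      | omega
      | (simp only [χbad] at hsum; revert hsum; decide)
end

section
/- For all positive integers x, y, z with x + 2y = 4z, it is not the case that ord₂(x) ≡ ord₂(y) ≡ ord₂(z) (mod 3), where ord₂(n) denotes the 2-adic valuation of n (the largest m with 2^m dividing n). Consequently, the 3-coloring of the positive integers given by n ↦ ord₂(n) mod 3 admits no monochromatic solution of x + 2y - 4z = 0, so the equation x + 2y - 4z = 0 is not 3-regular. -/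
lemma x2y4z_key : ∀ x y z : ℕ, 0 < x → 0 < y → 0 < z → x + 2 * y = 4 * z →
      ¬ (padicValNat 2 x ≡ padicValNat 2 y [MOD 3] ∧
         padicValNat 2 y ≡ padicValNat 2 z [MOD 3]) := by
  intro x y z hx hy hz heq ⟨hab, hbc⟩
  have hx0 : x ≠ 0 := hx.ne'
  have hy0 : y ≠ 0 := hy.ne'
  have hz0 : z ≠ 0 := hz.ne'
  set a := padicValNat 2 x with ha
  set b := padicValNat 2 y with hb
  set c := padicValNat 2 z with hc
  have hab' : a % 3 = b % 3 := hab
  have hbc' : b % 3 = c % 3 := hbc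
  have v4z : padicValNat 2 (4 * z) = c + 2 := by
    have h4 : (4 : ℕ) = 2 ^ 2 := by norm_num
    rw [h4, padicValNat.mul (by positivity) hz0, padicValNat.prime_pow]
    omega
  have hdx : 2 ^ a ∣ x := pow_padicValNat_dvd
  have hdy : 2 ^ b ∣ y := pow_padicValNat_dvd
  have hxd : ¬ 2 ^ (a + 1) ∣ x := pow_succ_padicValNat_not_dvd hx0
  have hyd : ¬ 2 ^ (b + 1) ∣ y := pow_succ_padicValNat_not_dvd hy0
  have h2y : 2 ^ (b + 1) ∣ 2 * y := by
    have := mul_dvd_mul_left 2 hdy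
    simpa [pow_succ, mul_comm, mul_left_comm] using this
  have h4z0 : 4 * z ≠ 0 := by positivity
  rcases lt_trichotomy a (b + 1) with h | h | h
  · -- a ≤ b
    have h2a : a ≤ c + 2 := by
      rw [← v4z, ← padicValNat_dvd_iff_le h4z0, ← heq]
      exact Nat.dvd_add hdx ((pow_dvd_pow 2 (by omega : a ≤ b + 1)).trans h2y)
    have h2b : c + 2 ≤ a := by
      by_contra hcon
      have hdvd : 2 ^ (a + 1) ∣ 4 * z := by
        rw [padicValNat_dvd_iff_le h4z0, v4z]; omega
      have h2ay : 2 ^ (a + 1) ∣ 2 * y :=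
        (pow_dvd_pow 2 (by omega : a + 1 ≤ b + 1)).trans h2y
      have : 2 ^ (a + 1) ∣ x := by
        have := Nat.dvd_sub hdvd h2ay
        rwa [(by omega : 4 * z - 2 * y = x)] at this
      exact hxd this
    omega
  · omega
  · -- a > b + 1
    have h2a : b + 1 ≤ c + 2 := by
      rw [← v4z, ← padicValNat_dvd_iff_le h4z0, ← heq]
      exact Nat.dvd_add ((pow_dvd_pow 2 (by omega : b + 1 ≤ a)).trans hdx) h2y
    have h2b : ¬ (b + 2 ≤ c + 2) := by
      intro hcon
      have hdvd : 2 ^ (b + 2) ∣ 4 * z := by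
        rw [padicValNat_dvd_iff_le h4z0, v4z]; omega
      have hbx : 2 ^ (b + 2) ∣ x := (pow_dvd_pow 2 (by omega : b + 2 ≤ a)).trans hdx
      have h2yd : 2 ^ (b + 2) ∣ 2 * y := by
        have := Nat.dvd_sub hdvd hbx
        rwa [(by omega : 4 * z - x = 2 * y)] at this
      have : 2 ^ (b + 1) ∣ y := by
        rw [← Nat.mul_dvd_mul_iff_left (show 0 < 2 by norm_num)]
        have hp : 2 * 2 ^ (b + 1) = 2 ^ (b + 2) := by ring
        rwa [hp]
      exact hyd this
    omega

/-- For positive integers with `x + 2y = 4z`, the 2-adic valuations of `x`, `y`,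
`z` are not all congruent mod 3; consequently the 3-coloring
`n ↦ ord₂(n) mod 3` of the positive integers admits no monochromatic solution
of `x + 2y - 4z = 0`, so this equation is not 3-regular. -/
theorem x2y4z_not_three_regular :
    (∀ x y z : ℕ, 0 < x → 0 < y → 0 < z → x + 2 * y = 4 * z →
      ¬ (padicValNat 2 x ≡ padicValNat 2 y [MOD 3] ∧
         padicValNat 2 y ≡ padicValNat 2 z [MOD 3])) ∧
    ¬ (∀ χ : ℕ → Fin 3, ∃ x y z : ℕ, 0 < x ∧ 0 < y ∧ 0 < z ∧
        x + 2 * y = 4 * z ∧ χ x = χ y ∧ χ y = χ z) := by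
  refine ⟨x2y4z_key, fun h => ?_⟩
  obtain ⟨x, y, z, hx, hy, hz, heq, h1, h2⟩ :=
    h (fun n => ⟨padicValNat 2 n % 3, Nat.mod_lt _ (by norm_num)⟩)
  exact x2y4z_key x y z hx hy hz heq
    ⟨congrArg Fin.val h1, congrArg Fin.val h2⟩
end
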